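/- arXiv:1105.2698 — 5 statements merged into one kernel-verified Lean document; each statement's English description precedes it below -/
import Mathlib

section
/- (Theorem 1(a)) Let (S_1,S_2,S_3) be pairwise disjoint subsets of {1,…,n}, not all empty, and let x = 0000. Then V(x) = 0; that is, there is no word of type 0000. -/
open Real Finset

noncomputable section

/-- The trigonometric argument π/4 + (π/2)·t. -/
def trigArg (t : ℝ) : ℝ := Real.pi / 4 + Real.pi / 2 * t

/-- The dot product a'w = Σ_j a_j w_j as a real number. -/
def dotR {n : ℕ} (a w : Fin n → Fin 4) : ℝ :=
  ∑ j, ((a j : ℕ) : ℝ) * ((w j : ℕ) : ℝ)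

/-- ψ(a), depending on the pairwise disjoint subsets S₁, S₂, S₃. -/
def psi {n : ℕ} (S1 S2 S3 : Finset (Fin n)) (a : Fin n → Fin 4) : ℝ :=
  (∏ j ∈ S1, (Real.sin (trigArg ((a j : ℕ) : ℝ)) * Real.cos (trigArg ((a j : ℕ) : ℝ)))) *
  (∏ j ∈ S2, Real.cos (trigArg ((a j : ℕ) : ℝ))) *
  (∏ j ∈ S3, Real.sin (trigArg ((a j : ℕ) : ℝ)))

/-- φ(x; a) for a binary 4-tuple x = x₁x₂x₃x₄. -/
def phi {n : ℕ} (u v : Fin n → Fin 4) (S1 S2 S3 : Finset (Fin n))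
    (x1 x2 x3 x4 : ℕ) (a : Fin n → Fin 4) : ℝ :=
  (2 : ℝ) ^ (((2 * S1.card + S2.card + S3.card + (x1 + x2 + x3 + x4) : ℕ) : ℝ) / 2
      - 2 * (n : ℝ)) *
    Real.sin (trigArg (dotR a u)) ^ x1 * Real.cos (trigArg (dotR a u)) ^ x2 *
    Real.sin (trigArg (dotR a v)) ^ x3 * Real.cos (trigArg (dotR a v)) ^ x4 *
    psi S1 S2 S3 a

/-- V(x) = Σ_{a ∈ {0,1,2,3}ⁿ} φ(x; a). -/
def Vval {n : ℕ} (u v : Fin n → Fin 4) (S1 S2 S3 : Finset (Fin n))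
    (x1 x2 x3 x4 : ℕ) : ℝ :=
  ∑ a : Fin n → Fin 4, phi u v S1 S2 S3 x1 x2 x3 x4 a

/-- S₁, S₂, S₃ are pairwise disjoint. -/
def PairwiseDisj {n : ℕ} (S1 S2 S3 : Finset (Fin n)) : Prop :=
  Disjoint S1 S2 ∧ Disjoint S1 S3 ∧ Disjoint S2 S3

/-- (S₁,S₂,S₃) is a word of type x = x₁x₂x₃x₄. -/
def IsWord {n : ℕ} (u v : Fin n → Fin 4) (S1 S2 S3 : Finset (Fin n))
    (x1 x2 x3 x4 : ℕ) : Prop :=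
  PairwiseDisj S1 S2 S3 ∧ Vval u v S1 S2 S3 x1 x2 x3 x4 ≠ 0

/-- The length m + X of a word. -/
def wordLength {n : ℕ} (S1 S2 S3 : Finset (Fin n)) (x1 x2 x3 x4 : ℕ) : ℕ :=
  2 * S1.card + S2.card + S3.card + (x1 + x2 + x3 + x4)

/-- The set of words of type x = x₁x₂x₃x₄. -/
def wordSet {n : ℕ} (u v : Fin n → Fin 4) (x1 x2 x3 x4 : ℕ) :
    Set (Finset (Fin n) × Finset (Fin n) × Finset (Fin n)) :=
  {t | IsWord u v t.1 t.2.1 t.2.2 x1 x2 x3 x4}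

/-- The set of words of type x = x₁x₂x₃x₄ having length L. -/
def wordSetLen {n : ℕ} (u v : Fin n → Fin 4) (x1 x2 x3 x4 L : ℕ) :
    Set (Finset (Fin n) × Finset (Fin n) × Finset (Fin n)) :=
  {t | IsWord u v t.1 t.2.1 t.2.2 x1 x2 x3 x4 ∧
       wordLength t.1 t.2.1 t.2.2 x1 x2 x3 x4 = L}

/-- f_{ks} = #{j : u_j = k, v_j = s}. -/
def freq {n : ℕ} (u v : Fin n → Fin 4) (k s : Fin 4) : ℕ :=
  (Finset.univ.filter (fun j => u j = k ∧ v j = s)).card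

def lam1 {n : ℕ} (u v : Fin n → Fin 4) : ℕ := freq u v 1 0 + freq u v 3 0
def lam2 {n : ℕ} (u v : Fin n → Fin 4) : ℕ := freq u v 0 1 + freq u v 0 3
def lam3 {n : ℕ} (u v : Fin n → Fin 4) : ℕ := freq u v 1 2 + freq u v 3 2
def lam4 {n : ℕ} (u v : Fin n → Fin 4) : ℕ := freq u v 2 1 + freq u v 2 3
def lam5 {n : ℕ} (u v : Fin n → Fin 4) : ℕ := freq u v 1 1 + freq u v 3 3
def lam6 {n : ℕ} (u v : Fin n → Fin 4) : ℕ := freq u v 1 3 + freq u v 3 1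
def lam7 {n : ℕ} (u v : Fin n → Fin 4) : ℕ := freq u v 0 2
def lam8 {n : ℕ} (u v : Fin n → Fin 4) : ℕ := freq u v 2 0
def lam9 {n : ℕ} (u v : Fin n → Fin 4) : ℕ := freq u v 2 2
def lam10 {n : ℕ} (u v : Fin n → Fin 4) : ℕ := freq u v 0 0

def len1 {n : ℕ} (u v : Fin n → Fin 4) : ℕ :=
  2 * (lam4 u v + lam8 u v + lam9 u v) + lam1 u v + lam3 u v + lam5 u v + lam6 u v
def len2 {n : ℕ} (u v : Fin n → Fin 4) : ℕ :=
  2 * (lam3 u v + lam7 u v + lam9 u v) + lam2 u v + lam4 u v + lam5 u v + lam6 u v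
def len3 {n : ℕ} (u v : Fin n → Fin 4) : ℕ :=
  2 * (lam2 u v + lam8 u v + lam9 u v) + lam1 u v + lam3 u v + lam5 u v + lam6 u v
def len4 {n : ℕ} (u v : Fin n → Fin 4) : ℕ :=
  2 * (lam1 u v + lam7 u v + lam9 u v) + lam2 u v + lam4 u v + lam5 u v + lam6 u v
def len5 {n : ℕ} (u v : Fin n → Fin 4) : ℕ :=
  2 * (lam1 u v + lam3 u v + lam5 u v + lam6 u v)
def len6 {n : ℕ} (u v : Fin n → Fin 4) : ℕ :=
  2 * (lam2 u v + lam4 u v + lam5 u v + lam6 u v)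
def len7 {n : ℕ} (u v : Fin n → Fin 4) : ℕ :=
  2 * (lam1 u v + lam2 u v + lam3 u v + lam4 u v)
def len8 {n : ℕ} (u v : Fin n → Fin 4) : ℕ :=
  2 * (lam7 u v + lam8 u v) + lam1 u v + lam2 u v + lam3 u v + lam4 u v
def len9 {n : ℕ} (u v : Fin n → Fin 4) : ℕ :=
  2 * (lam5 u v + lam7 u v + lam8 u v) + lam1 u v + lam2 u v + lam3 u v + lam4 u v
def len10 {n : ℕ} (u v : Fin n → Fin 4) : ℕ :=
  2 * (lam6 u v + lam7 u v + lam8 u v) + lam1 u v + lam2 u v + lam3 u v + lam4 u v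

/-- ρ₁ = 2^{−⌊(λ₁+λ₃+λ₅+λ₆)/2⌋}. -/
def rho1 {n : ℕ} (u v : Fin n → Fin 4) : ℝ :=
  ((2 : ℝ) ^ ((lam1 u v + lam3 u v + lam5 u v + lam6 u v) / 2))⁻¹
/-- ρ₂ = 2^{−⌊(λ₂+λ₄+λ₅+λ₆)/2⌋}. -/
def rho2 {n : ℕ} (u v : Fin n → Fin 4) : ℝ :=
  ((2 : ℝ) ^ ((lam2 u v + lam4 u v + lam5 u v + lam6 u v) / 2))⁻¹
/-- ξ₁ = 2^{−⌊(λ₁+λ₃)/2⌋}. -/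
def xi1 {n : ℕ} (u v : Fin n → Fin 4) : ℝ :=
  ((2 : ℝ) ^ ((lam1 u v + lam3 u v) / 2))⁻¹
/-- ξ₂ = 2^{−⌊(λ₂+λ₄)/2⌋}. -/
def xi2 {n : ℕ} (u v : Fin n → Fin 4) : ℝ :=
  ((2 : ℝ) ^ ((lam2 u v + lam4 u v) / 2))⁻¹
/-- ξ = 2^{−⌊(λ₁+λ₂+λ₃+λ₄+1)/2⌋}. -/
def xival {n : ℕ} (u v : Fin n → Fin 4) : ℝ :=
  ((2 : ℝ) ^ ((lam1 u v + lam2 u v + lam3 u v + lam4 u v + 1) / 2))⁻¹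

/-!
`ψ(a)` is a product of one-coordinate factors `g_j(a_j)`, so `∑_a ψ(a)` is the product over `j`
of the one-variable sums `∑_{t ∈ Z_4} g_j(t)`. For `j ∈ S_1 ∪ S_2 ∪ S_3` the factor `g_j` is `sin`, `cos`
or `sin · cos` evaluated at `π/4 + (π/2) t`, and each of these sums over `Z_4` to zero since
`sin`, `cos` are `π`-antiperiodic and `sin · cos` is `π/2`-antiperiodic. For `x = 0000` the
summand `φ(x; a)` is a constant multiple of `ψ(a)`, so `V(x) = 0`.
-/

lemma sum_fin_four_trigArg_eq_zero_of_antiperiodic_pi {f : ℝ → ℝ}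
    (hf : Function.Antiperiodic f π) : ∑ t : Fin 4, f (trigArg ((t : ℕ) : ℝ)) = 0 := by
  have h2 : trigArg 2 = trigArg 0 + π := by unfold trigArg; ring
  have h3 : trigArg 3 = trigArg 1 + π := by unfold trigArg; ring
  simp only [Fin.sum_univ_four, Fin.val_zero, Fin.val_one, Fin.val_two, Fin.isValue]
  norm_num [h2, h3, hf _]

lemma sum_fin_four_trigArg_eq_zero_of_antiperiodic_pi_div_two {f : ℝ → ℝ}
    (hf : Function.Antiperiodic f (π / 2)) : ∑ t : Fin 4, f (trigArg ((t : ℕ) : ℝ)) = 0 := by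
  have h1 : trigArg 1 = trigArg 0 + π / 2 := by unfold trigArg; ring
  have h3 : trigArg 3 = trigArg 2 + π / 2 := by unfold trigArg; ring
  simp only [Fin.sum_univ_four, Fin.val_zero, Fin.val_one, Fin.val_two, Fin.isValue]
  norm_num [h1, h3, hf _]

lemma sin_mul_cos_antiperiodic : Function.Antiperiodic (fun x => sin x * cos x) (π / 2) := by
  intro x
  simp only [sin_add_pi_div_two, cos_add_pi_div_two]
  ring

section Psi

variable {n : ℕ} (S1 S2 S3 : Finset (Fin n))

def psiFactor (j : Fin n) (t : Fin 4) : ℝ :=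
  (if j ∈ S1 then sin (trigArg ((t : ℕ) : ℝ)) * cos (trigArg ((t : ℕ) : ℝ)) else 1) *
  (if j ∈ S2 then cos (trigArg ((t : ℕ) : ℝ)) else 1) *
  (if j ∈ S3 then sin (trigArg ((t : ℕ) : ℝ)) else 1)

lemma psi_eq_prod_psiFactor (a : Fin n → Fin 4) :
    psi S1 S2 S3 a = ∏ j, psiFactor S1 S2 S3 j (a j) := by
  simp only [psi, psiFactor, prod_mul_distrib, Fintype.prod_extend_by_one]

lemma sum_psiFactor_eq_zero (hd : PairwiseDisj S1 S2 S3) {j : Fin n}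
    (hj : j ∈ S1 ∪ S2 ∪ S3) : ∑ t, psiFactor S1 S2 S3 j t = 0 := by
  obtain ⟨h12, h13, h23⟩ := hd
  rcases mem_union.1 hj with hj | hj3
  · rcases mem_union.1 hj with hj1 | hj2
    · simp only [psiFactor, hj1, disjoint_left.1 h12 hj1, disjoint_left.1 h13 hj1,
        if_true, if_false, mul_one]
      exact sum_fin_four_trigArg_eq_zero_of_antiperiodic_pi_div_two sin_mul_cos_antiperiodic
    · simp only [psiFactor, hj2, disjoint_right.1 h12 hj2, disjoint_left.1 h23 hj2,
        if_true, if_false, one_mul, mul_one]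
      exact sum_fin_four_trigArg_eq_zero_of_antiperiodic_pi cos_antiperiodic
  · simp only [psiFactor, hj3, disjoint_right.1 h13 hj3, disjoint_right.1 h23 hj3,
      if_true, if_false, one_mul]
    exact sum_fin_four_trigArg_eq_zero_of_antiperiodic_pi sin_antiperiodic

lemma sum_psi_eq_zero (hd : PairwiseDisj S1 S2 S3) (hne : (S1 ∪ S2 ∪ S3).Nonempty) :
    ∑ a : Fin n → Fin 4, psi S1 S2 S3 a = 0 := by
  obtain ⟨j, hj⟩ := hne
  simp_rw [psi_eq_prod_psiFactor, ← Fintype.prod_sum]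
  exact prod_eq_zero (mem_univ j) (sum_psiFactor_eq_zero S1 S2 S3 hd hj)

end Psi

theorem theorem1_a_general (n : ℕ) (u v : Fin n → Fin 4)
    (S1 S2 S3 : Finset (Fin n)) (hd : PairwiseDisj S1 S2 S3)
    (hne : (S1 ∪ S2 ∪ S3).Nonempty) :
    Vval u v S1 S2 S3 0 0 0 0 = 0 := by
  simp only [Vval, phi, pow_zero, mul_one]
  rw [← mul_sum, sum_psi_eq_zero S1 S2 S3 hd hne, mul_zero]

/-- Theorem 1(a): for x = 0000 there is no word of type x, i.e. V(0000) = 0 for every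
choice of pairwise disjoint S₁, S₂, S₃ (not all empty). -/
theorem theorem1_a (n : ℕ) (hn : 1 ≤ n) (u v : Fin n → Fin 4)
    (S1 S2 S3 : Finset (Fin n)) (hd : PairwiseDisj S1 S2 S3)
    (hne : (S1 ∪ S2 ∪ S3).Nonempty) :
    Vval u v S1 S2 S3 0 0 0 0 = 0 :=
  theorem1_a_general n u v S1 S2 S3 hd hne
end
end

section
/- (Theorem 1(b)) For x = 0100 as well as for x = 1000, the number of triples (S_1,S_2,S_3) of pairwise disjoint subsets of {1,…,n} that are words of type x equals ρ_1^{−2}; moreover every such word has aliasing index |V(x)| = ρ_1 and length m + X = l_1 + 1. -/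
open Real Finset

noncomputable section

/-!
For an integer t, √2·exp(i(π/4 + πt/2)) = (1 + i)·iᵗ. Hence every factor of ψ(a) is ±1/√2, and for
x = e(1-e)00 with e ∈ {0, 1} the trigonometric factor of φ(x; a) is Re((-i)^e (1 + i) i^(a'u))/√2.
Summing over a, V(x) = 4⁻ⁿ Re((-i)^e (1 + i) ∏ⱼ Tⱼ) with character sums Tⱼ = Σ_b i^(b uⱼ) wⱼ(b),
where the sign pattern wⱼ records which Sₖ contains j. The product vanishes unless
S₁ = {uⱼ = 2} and S₂ ⊔ S₃ = {uⱼ odd}, and then ∏ Tⱼ = 4^(n-r) (2(1 + i))^r (-i)^q with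
r = λ₁ + λ₃ + λ₅ + λ₆ = #{uⱼ odd}. Thus |V| = 2⁻ʳ |Re((1 + i)^(r+1) (-i)^(q+e))|: for even r this is
2^(-r/2) = ρ₁, for odd r it is ρ₁ or 0 according to the parity of q ≡ #S₂ + #{uⱼ = 3}. The words are
(S₁, S₂, {uⱼ odd} \ S₂) with S₂ any subset of the odd positions (r even) or any subset of a fixed
parity (r odd), 4^⌊r/2⌋ = ρ₁⁻² of them in both cases.
-/

open Complex

lemma abs_re_I_pow_mul (m : ℕ) (z : ℂ) : |(I ^ m * z).re| = if Even m then |z.re| else |z.im| := by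
  induction m generalizing z with
  | zero => simp
  | succ m ih =>
    rw [pow_succ, mul_assoc, ih, I_mul_re, I_mul_im, abs_neg]
    by_cases hm : Even m <;> simp [hm, Nat.even_add_one]

lemma abs_re_one_add_I_pow_succ_mul_neg_I_pow (r p : ℕ) :
    |((1 + I) ^ (r + 1) * (-I) ^ p).re| =
      if Even r ∨ Even ((r + 1) / 2 + p) then 2 ^ ((r + 1) / 2) else 0 := by
  have hsq : (1 + I) ^ 2 = 2 * I := by ring_nf; rw [I_sq]; ring
  have hneg : (-I) ^ p = I ^ (3 * p) := by rw [pow_mul]; norm_num [pow_succ]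
  obtain ⟨k, rfl | rfl⟩ := Nat.even_or_odd' r
  · rw [show (1 + I) ^ (2 * k + 1) * (-I) ^ p =
        I ^ (k + 3 * p) * (((2 : ℝ) ^ k : ℝ) * (1 + I)) by
      rw [pow_succ, pow_mul, hsq, hneg]; push_cast; ring]
    rw [abs_re_I_pow_mul, if_pos (Or.inl (even_two_mul k)), show (2 * k + 1) / 2 = k by omega,
      re_ofReal_mul, im_ofReal_mul]
    split_ifs <;> simp
  · rw [show (1 + I) ^ (2 * k + 1 + 1) * (-I) ^ p =
        I ^ (k + 1 + 3 * p) * (((2 : ℝ) ^ (k + 1) : ℝ) : ℂ) by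
      rw [show 2 * k + 1 + 1 = 2 * (k + 1) by ring, pow_mul, hsq, hneg]; push_cast; ring]
    rw [abs_re_I_pow_mul, show (2 * k + 1 + 1) / 2 = k + 1 by omega]
    have hpar : Even (k + 1 + 3 * p) ↔ Even (2 * k + 1) ∨ Even (k + 1 + p) := by
      simp [Nat.even_add, parity_simps]
    simp only [ofReal_re, ofReal_im, hpar]
    split_ifs <;> simp

lemma card_filter_powerset_insert_even_card_add {α : Type*} [DecidableEq α] {s : Finset α}
    {a : α} (ha : a ∉ s) (c : ℕ) : #{t ∈ (insert a s).powerset | Even (#t + c)} = 2 ^ #s := by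
  have hnot {t} (ht : t ∈ s.powerset) : a ∉ t := notMem_of_mem_powerset_of_notMem ht ha
  have hdisj : Disjoint {t ∈ s.powerset | Even (#t + c)}
      {t ∈ s.powerset.image (insert a) | Even (#t + c)} := by
    simp only [disjoint_left, mem_filter, mem_image, not_and, forall_exists_index, and_imp]
    rintro _ ht _ t - rfl -
    exact hnot ht (mem_insert_self a t)
  have hinj : Set.InjOn (insert a)
      (({t ∈ s.powerset | Even (#(insert a t) + c)} : Finset (Finset α)) : Set (Finset α)) :=
    fun t ht t' ht' h => by
      rw [← erase_insert (s := t) (hnot (mem_filter.1 ht).1), h,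
        erase_insert (s := t') (hnot (mem_filter.1 ht').1)]
  have hodd : {t ∈ s.powerset | Even (#(insert a t) + c)} = {t ∈ s.powerset | ¬Even (#t + c)} :=
    filter_congr fun t ht => by
      rw [card_insert_of_notMem (hnot ht), add_right_comm, Nat.even_add_one]
  rw [powerset_insert, filter_union, card_union_of_disjoint hdisj, filter_image,
    card_image_of_injOn hinj, hodd, card_filter_add_card_filter_not, card_powerset]

lemma card_filter_powerset_even_card_add {α : Type*} [DecidableEq α] {s : Finset α}
    (hs : s.Nonempty) (c : ℕ) : #{t ∈ s.powerset | Even (#t + c)} = 2 ^ (#s - 1) := by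
  obtain ⟨a, ha⟩ := hs
  rw [← insert_erase ha, card_filter_powerset_insert_even_card_add (notMem_erase a s),
    card_insert_of_notMem (notMem_erase a s), Nat.add_sub_cancel]

lemma card_filter_powerset_even_or_even_card_add {α : Type*} [DecidableEq α] (s : Finset α)
    (c : ℕ) : #{t ∈ s.powerset | Even #s ∨ Even (#t + c)} = 4 ^ (#s / 2) := by
  rw [show (4 : ℕ) = 2 ^ 2 by rfl, ← pow_mul]
  by_cases hs : Even #s
  · simp only [hs, true_or, filter_true_of_mem fun _ _ => trivial, card_powerset]
    rw [Nat.two_mul_div_two_of_even hs]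
  · have hne : s.Nonempty := card_pos.1 (Nat.pos_of_ne_zero fun h => hs (h ▸ Even.zero))
    simp only [hs, false_or]
    rw [card_filter_powerset_even_card_add hne]
    congr 1
    rw [Nat.not_even_iff_odd] at hs
    obtain ⟨k, hk⟩ := hs
    omega

lemma two_rpow_div_two_sub (k n : ℕ) : (2 : ℝ) ^ ((k : ℝ) / 2 - 2 * n) = √2 ^ k / 4 ^ n := by
  rw [Real.rpow_sub zero_lt_two, Real.sqrt_eq_rpow, ← Real.rpow_natCast,
    ← Real.rpow_mul zero_le_two,
    show (4 : ℝ) ^ n = 2 ^ (2 * (n : ℝ)) by norm_num [Real.rpow_mul, Real.rpow_natCast]]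
  ring_nf

lemma sqrt_two_mul_exp_trigArg_mul_I (N : ℕ) :
    (√2 : ℂ) * exp (trigArg N * I) = (1 + I) * I ^ N := by
  have hsqrt : (√2 : ℂ) * √2 = 2 := by exact_mod_cast Real.mul_self_sqrt zero_le_two
  have hquarter : (√2 : ℂ) * exp ((π / 4 : ℝ) * I) = 1 + I := by
    rw [exp_mul_I, ← ofReal_cos, ← ofReal_sin, Real.cos_pi_div_four, Real.sin_pi_div_four]
    push_cast
    linear_combination (1 + I) / 2 * hsqrt
  have hsplit : (trigArg N : ℂ) * I = (π / 4 : ℝ) * I + N * (π / 2 * I) := by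
    rw [trigArg]; push_cast; ring
  rw [hsplit, Complex.exp_add, Complex.exp_nat_mul, exp_pi_div_two_mul_I, ← mul_assoc, hquarter]

lemma sqrt_two_mul_cos_trigArg (N : ℕ) : √2 * Real.cos (trigArg N) = ((1 + I) * I ^ N).re := by
  rw [← sqrt_two_mul_exp_trigArg_mul_I, re_ofReal_mul, exp_ofReal_mul_I_re]

lemma sqrt_two_mul_sin_trigArg (N : ℕ) : √2 * Real.sin (trigArg N) = ((1 + I) * I ^ N).im := by
  rw [← sqrt_two_mul_exp_trigArg_mul_I, im_ofReal_mul, exp_ofReal_mul_I_im]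

lemma sqrt_two_mul_sin_pow_mul_cos_pow_trigArg {e : ℕ} (he : e ≤ 1) (N : ℕ) :
    √2 * (Real.sin (trigArg N) ^ e * Real.cos (trigArg N) ^ (1 - e)) =
      ((-I) ^ e * ((1 + I) * I ^ N)).re := by
  interval_cases e
  · simpa using sqrt_two_mul_cos_trigArg N
  · simpa using sqrt_two_mul_sin_trigArg N

def cosSign : Fin 4 → ℝ := ![1, -1, -1, 1]
def sinSign : Fin 4 → ℝ := ![1, 1, -1, -1]

lemma sqrt_two_mul_cos_trigArg_digit (b : Fin 4) :
    √2 * Real.cos (trigArg (b : ℕ)) = cosSign b := by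
  rw [sqrt_two_mul_cos_trigArg]; fin_cases b <;> simp [cosSign, pow_succ]

lemma sqrt_two_mul_sin_trigArg_digit (b : Fin 4) :
    √2 * Real.sin (trigArg (b : ℕ)) = sinSign b := by
  rw [sqrt_two_mul_sin_trigArg]; fin_cases b <;> simp [sinSign, pow_succ]

def coordSum (c : Fin 4) (w : Fin 4 → ℝ) : ℂ := ∑ b : Fin 4, I ^ ((b : ℕ) * c) * w b

lemma coordSum_one (c : Fin 4) : coordSum c 1 = if c = 0 then 4 else 0 := by
  fin_cases c <;> simp [coordSum, Fin.sum_univ_four, pow_succ]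

lemma coordSum_sinSign_mul_cosSign (c : Fin 4) :
    coordSum c (sinSign * cosSign) = if c = 2 then 4 else 0 := by
  fin_cases c <;> simp [coordSum, Fin.sum_univ_four, sinSign, cosSign, pow_succ]
  ring

lemma coordSum_cosSign (c : Fin 4) :
    coordSum c cosSign =
      if c = 1 then 2 * (1 + I) * -I else if c = 3 then 2 * (1 + I) else 0 := by
  fin_cases c <;> simp [coordSum, Fin.sum_univ_four, cosSign, pow_succ]
  all_goals apply Complex.ext <;> simp <;> norm_num

lemma coordSum_sinSign (c : Fin 4) :
    coordSum c sinSign =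
      if c = 1 then 2 * (1 + I) else if c = 3 then 2 * (1 + I) * -I else 0 := by
  fin_cases c <;> simp [coordSum, Fin.sum_univ_four, sinSign, pow_succ]
  all_goals apply Complex.ext <;> simp <;> norm_num

section Weights

variable {n : ℕ} (S1 S2 S3 : Finset (Fin n))

def weight (j : Fin n) : Fin 4 → ℝ :=
  if j ∈ S1 then sinSign * cosSign else if j ∈ S2 then cosSign else if j ∈ S3 then sinSign else 1

variable {S1 S2 S3}

lemma sqrt_two_pow_mul_psi (h : PairwiseDisj S1 S2 S3) (a : Fin n → Fin 4) :
    √2 ^ (2 * #S1 + #S2 + #S3) * psi S1 S2 S3 a = ∏ j, weight S1 S2 S3 j (a j) := by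
  obtain ⟨h12, h13, h23⟩ := h
  have hsub : ∏ j ∈ S1 ∪ S2 ∪ S3, weight S1 S2 S3 j (a j) = ∏ j, weight S1 S2 S3 j (a j) :=
    prod_subset (subset_univ _) fun j _ hj => by simp_all [weight]
  rw [← hsub, prod_union (disjoint_union_left.2 ⟨h13, h23⟩), prod_union h12, psi]
  have e1 : ∏ j ∈ S1, weight S1 S2 S3 j (a j) =
      √2 ^ (2 * #S1) *
        ∏ j ∈ S1, (Real.sin (trigArg (a j : ℕ)) * Real.cos (trigArg (a j : ℕ))) := by
    rw [pow_mul, ← prod_const, ← prod_mul_distrib]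
    refine prod_congr rfl fun j hj => ?_
    rw [weight, if_pos hj, Pi.mul_apply, ← sqrt_two_mul_sin_trigArg_digit,
      ← sqrt_two_mul_cos_trigArg_digit]
    ring
  have e2 : ∏ j ∈ S2, weight S1 S2 S3 j (a j) =
      √2 ^ #S2 * ∏ j ∈ S2, Real.cos (trigArg (a j : ℕ)) := by
    rw [← prod_const, ← prod_mul_distrib]
    refine prod_congr rfl fun j hj => ?_
    rw [weight, if_neg (disjoint_right.1 h12 hj), if_pos hj, sqrt_two_mul_cos_trigArg_digit]
  have e3 : ∏ j ∈ S3, weight S1 S2 S3 j (a j) =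
      √2 ^ #S3 * ∏ j ∈ S3, Real.sin (trigArg (a j : ℕ)) := by
    rw [← prod_const, ← prod_mul_distrib]
    refine prod_congr rfl fun j hj => ?_
    rw [weight, if_neg (disjoint_right.1 h13 hj), if_neg (disjoint_right.1 h23 hj), if_pos hj,
      sqrt_two_mul_sin_trigArg_digit]
  rw [e1, e2, e3]
  ring

lemma dotR_eq_natCast {n : ℕ} (a w : Fin n → Fin 4) :
    dotR a w = ((∑ j, (a j : ℕ) * (w j : ℕ) : ℕ) : ℝ) := by
  simp [dotR]

end Weights

section Words

variable {n : ℕ} (u v : Fin n → Fin 4) {S1 S2 S3 : Finset (Fin n)} {e : ℕ}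

def levelSet (u : Fin n → Fin 4) (c : Fin 4) : Finset (Fin n) := {j | u j = c}

@[simp] lemma mem_levelSet {u : Fin n → Fin 4} {c : Fin 4} {j : Fin n} :
    j ∈ levelSet u c ↔ u j = c := by
  simp [levelSet]

def oddSet (u : Fin n → Fin 4) : Finset (Fin n) := {j | u j = 1 ∨ u j = 3}

@[simp] lemma mem_oddSet {u : Fin n → Fin 4} {j : Fin n} :
    j ∈ oddSet u ↔ u j = 1 ∨ u j = 3 := by
  simp [oddSet]

def twistCount (u : Fin n → Fin 4) (S2 : Finset (Fin n)) : ℕ :=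
  #{j ∈ oddSet u | j ∈ S2 ↔ u j = 1}

lemma phi_eq (h : PairwiseDisj S1 S2 S3) (he : e ≤ 1) (a : Fin n → Fin 4) :
    phi u v S1 S2 S3 e (1 - e) 0 0 a =
      ((4 : ℝ) ^ n)⁻¹ * ((-I) ^ e * ((1 + I) * I ^ (∑ j, (a j : ℕ) * (u j : ℕ)))).re *
        ∏ j, weight S1 S2 S3 j (a j) := by
  rw [phi, show 2 * #S1 + #S2 + #S3 + (e + (1 - e) + 0 + 0) = 2 * #S1 + #S2 + #S3 + 1 by omega,
    two_rpow_div_two_sub, ← sqrt_two_pow_mul_psi h, dotR_eq_natCast,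
    ← sqrt_two_mul_sin_pow_mul_cos_pow_trigArg he]
  field_simp
  ring

lemma Vval_eq (h : PairwiseDisj S1 S2 S3) (he : e ≤ 1) :
    Vval u v S1 S2 S3 e (1 - e) 0 0 =
      ((4 : ℝ) ^ n)⁻¹ * ((-I) ^ e * (1 + I) * ∏ j, coordSum (u j) (weight S1 S2 S3 j)).re := by
  have hfactor : ∏ j, coordSum (u j) (weight S1 S2 S3 j) =
      ∑ a : Fin n → Fin 4,
        I ^ (∑ j, (a j : ℕ) * (u j : ℕ)) * ((∏ j, weight S1 S2 S3 j (a j) : ℝ) : ℂ) := by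
    simp only [coordSum, Fintype.prod_sum, ← prod_pow_eq_pow_sum, ofReal_prod,
      ← prod_mul_distrib]
  rw [Vval, hfactor, mul_sum, re_sum, mul_sum]
  refine sum_congr rfl fun a _ => ?_
  rw [phi_eq u v h he, ← mul_assoc _ (I ^ _), re_mul_ofReal, mul_assoc ((-I) ^ e)]
  ring

lemma coordSum_weight_ne_zero (h : PairwiseDisj S1 S2 S3) {j : Fin n}
    (hT : coordSum (u j) (weight S1 S2 S3 j) ≠ 0) :
    (j ∈ S1 ↔ u j = 2) ∧ (j ∈ S2 ∪ S3 ↔ j ∈ oddSet u) := by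
  obtain ⟨h12, h13, h23⟩ := h
  rw [disjoint_left] at h12 h13 h23
  simp only [weight] at hT
  rw [mem_oddSet]
  split_ifs at hT <;>
    simp only [coordSum_one, coordSum_sinSign_mul_cosSign, coordSum_cosSign,
      coordSum_sinSign] at hT <;>
    generalize u j = c at * <;> fin_cases c <;> simp_all

lemma prod_coordSum_weight_eq_zero (h : PairwiseDisj S1 S2 S3)
    (hbad : ¬(S1 = levelSet u 2 ∧ S2 ∪ S3 = oddSet u)) :
    ∏ j, coordSum (u j) (weight S1 S2 S3 j) = 0 := by
  contrapose! hbad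
  have hT j := coordSum_weight_ne_zero u h (prod_ne_zero_iff.1 hbad j (mem_univ j))
  exact ⟨ext fun j => by simpa using (hT j).1, ext fun j => (hT j).2⟩

lemma coordSum_weight_of_good (h23 : Disjoint S2 S3) (hS1 : S1 = levelSet u 2)
    (hO : S2 ∪ S3 = oddSet u) (j : Fin n) :
    coordSum (u j) (weight S1 S2 S3 j) =
      if j ∈ oddSet u then 2 * (1 + I) * (-I) ^ (if j ∈ S2 ↔ u j = 1 then 1 else 0) else 4 := by
  have hj : j ∈ S2 ∪ S3 ↔ j ∈ oddSet u := by rw [hO]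
  rw [disjoint_left] at h23
  subst hS1
  simp only [mem_union, mem_oddSet] at hj
  simp only [weight, mem_levelSet, mem_oddSet]
  generalize u j = c at *
  by_cases h2 : j ∈ S2 <;> by_cases h3 : j ∈ S3 <;> fin_cases c <;>
    simp_all [coordSum_one, coordSum_sinSign_mul_cosSign, coordSum_cosSign, coordSum_sinSign]

lemma prod_coordSum_weight_of_good (h23 : Disjoint S2 S3) (hS1 : S1 = levelSet u 2)
    (hO : S2 ∪ S3 = oddSet u) :
    ∏ j, coordSum (u j) (weight S1 S2 S3 j) =
      4 ^ #(oddSet u)ᶜ * (2 * (1 + I)) ^ #(oddSet u) * (-I) ^ twistCount u S2 := by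
  simp_rw [coordSum_weight_of_good u h23 hS1 hO, prod_ite, prod_const, prod_mul_distrib,
    prod_const, prod_pow_eq_pow_sum, sum_boole, filter_mem_eq_inter, univ_inter, filter_not]
  rw [filter_univ_mem, ← compl_eq_univ_sdiff, Nat.cast_id, twistCount, mul_pow]
  ring

lemma Vval_of_good (h : PairwiseDisj S1 S2 S3) (he : e ≤ 1) (hS1 : S1 = levelSet u 2)
    (hO : S2 ∪ S3 = oddSet u) :
    Vval u v S1 S2 S3 e (1 - e) 0 0 =
      (2 ^ #(oddSet u))⁻¹ * ((1 + I) ^ (#(oddSet u) + 1) * (-I) ^ (twistCount u S2 + e)).re := by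
  set r := #(oddSet u)
  have hcard : (4 : ℝ) ^ n = 4 ^ #(oddSet u)ᶜ * 2 ^ r * 2 ^ r := by
    rw [mul_assoc, ← mul_pow, show (2 : ℝ) * 2 = 4 by norm_num, ← pow_add, card_compl,
      Fintype.card_fin, Nat.sub_add_cancel (by simpa using card_le_univ (oddSet u))]
  rw [Vval_eq u v h he, prod_coordSum_weight_of_good u h.2.2 hS1 hO,
    show (-I) ^ e * (1 + I) * (4 ^ #(oddSet u)ᶜ * (2 * (1 + I)) ^ r * (-I) ^ twistCount u S2) =
      ((4 ^ #(oddSet u)ᶜ * 2 ^ r : ℝ) : ℂ) *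
        ((1 + I) ^ (r + 1) * (-I) ^ (twistCount u S2 + e)) by
      rw [mul_pow]; push_cast; ring,
    re_ofReal_mul, hcard]
  field_simp

lemma even_twistCount_add_card (hS2 : S2 ⊆ oddSet u) :
    Even (twistCount u S2 + #S2 + #(levelSet u 3)) := by
  have hcard (t : Finset (Fin n)) : #t = ∑ j, if j ∈ t then 1 else 0 := by
    rw [← card_filter, filter_univ_mem]
  rw [twistCount, hcard, hcard, hcard, ← sum_add_distrib, ← sum_add_distrib]
  refine even_sum _ fun j _ => ?_
  have hj := @hS2 j
  simp only [mem_filter, mem_oddSet, mem_levelSet] at hj ⊢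
  generalize u j = c at *
  by_cases h2 : j ∈ S2 <;> fin_cases c <;> simp_all

lemma lam1_add_lam3_add_lam5_add_lam6 :
    lam1 u v + lam3 u v + lam5 u v + lam6 u v = #(oddSet u) := by
  simp only [lam1, lam3, lam5, lam6, freq, oddSet, card_filter, ← sum_add_distrib]
  refine sum_congr rfl fun j _ => ?_
  generalize u j = c; generalize v j = d
  fin_cases c <;> fin_cases d <;> simp

lemma lam4_add_lam8_add_lam9 : lam4 u v + lam8 u v + lam9 u v = #(levelSet u 2) := by
  simp only [lam4, lam8, lam9, freq, levelSet, card_filter, ← sum_add_distrib]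
  refine sum_congr rfl fun j _ => ?_
  generalize u j = c; generalize v j = d
  fin_cases c <;> fin_cases d <;> simp

lemma rho1_eq : rho1 u v = (2 ^ (#(oddSet u) / 2))⁻¹ := by
  rw [rho1, lam1_add_lam3_add_lam5_add_lam6]

lemma len1_eq : len1 u v = 2 * #(levelSet u 2) + #(oddSet u) := by
  rw [len1, ← lam1_add_lam3_add_lam5_add_lam6 u v, ← lam4_add_lam8_add_lam9 u v]
  ring

def admissibleSet (u : Fin n → Fin 4) (e : ℕ) : Finset (Finset (Fin n)) :=
  {t ∈ (oddSet u).powerset |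
    Even #(oddSet u) ∨ Even (#t + ((#(oddSet u) + 1) / 2 + #(levelSet u 3) + e))}

lemma subset_oddSet_of_mem_admissibleSet {t : Finset (Fin n)} (ht : t ∈ admissibleSet u e) :
    t ⊆ oddSet u :=
  mem_powerset.1 (mem_filter.1 ht).1

lemma abs_Vval_of_good (h : PairwiseDisj S1 S2 S3) (he : e ≤ 1) (hS1 : S1 = levelSet u 2)
    (hO : S2 ∪ S3 = oddSet u) :
    |Vval u v S1 S2 S3 e (1 - e) 0 0| = if S2 ∈ admissibleSet u e then rho1 u v else 0 := by
  have hS2 : S2 ⊆ oddSet u := hO ▸ subset_union_left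
  have hpar : Even ((#(oddSet u) + 1) / 2 + (twistCount u S2 + e)) ↔
      Even (#S2 + ((#(oddSet u) + 1) / 2 + #(levelSet u 3) + e)) := by
    have := even_twistCount_add_card u hS2
    simp only [Nat.even_add] at this ⊢
    tauto
  have hsplit :
      (2 : ℝ) ^ #(oddSet u) = 2 ^ (#(oddSet u) / 2) * 2 ^ ((#(oddSet u) + 1) / 2) := by
    rw [← pow_add]; congr 1; omega
  rw [Vval_of_good u v h he hS1 hO, abs_mul, abs_inv, abs_pow, abs_two,
    abs_re_one_add_I_pow_succ_mul_neg_I_pow, rho1_eq]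
  simp only [admissibleSet, mem_filter, mem_powerset, hS2, true_and, hpar]
  split_ifs
  · rw [hsplit]; field_simp
  · simp

lemma disjoint_levelSet_two_oddSet : Disjoint (levelSet u 2) (oddSet u) := by
  rw [disjoint_left]
  intro j h2 hodd
  simp only [mem_levelSet, mem_oddSet] at h2 hodd
  rcases hodd with h | h <;> rw [h] at h2 <;> exact absurd h2 (by decide)

lemma rho1_pos : 0 < rho1 u v := by
  rw [rho1_eq]; positivity

lemma isWord_iff (he : e ≤ 1) :
    IsWord u v S1 S2 S3 e (1 - e) 0 0 ↔
      S1 = levelSet u 2 ∧ S2 ∈ admissibleSet u e ∧ S3 = oddSet u \ S2 := by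
  constructor
  · rintro ⟨hd, hV⟩
    obtain ⟨hS1, hO⟩ : S1 = levelSet u 2 ∧ S2 ∪ S3 = oddSet u := by
      by_contra hbad
      exact hV (by rw [Vval_eq u v hd he, prod_coordSum_weight_eq_zero u hd hbad]; simp)
    have hadm : S2 ∈ admissibleSet u e := by
      by_contra hadm
      exact hV (abs_eq_zero.1 (by rw [abs_Vval_of_good u v hd he hS1 hO, if_neg hadm]))
    refine ⟨hS1, hadm, ?_⟩
    rw [← hO, union_sdiff_left, sdiff_eq_self_of_disjoint hd.2.2.symm]
  · rintro ⟨rfl, hadm, rfl⟩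
    have hS2 := subset_oddSet_of_mem_admissibleSet u hadm
    have hd : PairwiseDisj (levelSet u 2) S2 (oddSet u \ S2) :=
      ⟨(disjoint_levelSet_two_oddSet u).mono_right hS2,
        (disjoint_levelSet_two_oddSet u).mono_right sdiff_subset, disjoint_sdiff⟩
    have habs := abs_Vval_of_good u v hd he rfl (union_sdiff_of_subset hS2)
    rw [if_pos hadm] at habs
    refine ⟨hd, fun hV => (rho1_pos u v).ne ?_⟩
    rw [← habs, hV, abs_zero]

lemma abs_Vval_of_isWord (he : e ≤ 1) (hw : IsWord u v S1 S2 S3 e (1 - e) 0 0) :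
    |Vval u v S1 S2 S3 e (1 - e) 0 0| = rho1 u v := by
  obtain ⟨hS1, hadm, hS3⟩ := (isWord_iff u v he).1 hw
  have hS2 := subset_oddSet_of_mem_admissibleSet u hadm
  rw [abs_Vval_of_good u v hw.1 he hS1 (hS3 ▸ union_sdiff_of_subset hS2), if_pos hadm]

lemma wordLength_of_isWord (he : e ≤ 1) (hw : IsWord u v S1 S2 S3 e (1 - e) 0 0) :
    wordLength S1 S2 S3 e (1 - e) 0 0 = len1 u v + 1 := by
  obtain ⟨rfl, hadm, rfl⟩ := (isWord_iff u v he).1 hw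
  have hS2 := subset_oddSet_of_mem_admissibleSet u hadm
  have := card_le_card hS2
  rw [wordLength, len1_eq, card_sdiff_of_subset hS2]
  omega

lemma ncard_wordSet (he : e ≤ 1) :
    (wordSet u v e (1 - e) 0 0).ncard = 4 ^ (#(oddSet u) / 2) := by
  have hset : wordSet u v e (1 - e) 0 0 =
      ((admissibleSet u e).image fun t => (levelSet u 2, t, oddSet u \ t) : Set _) := by
    ext ⟨S1, S2, S3⟩
    simp only [wordSet, Set.mem_ofPred_eq, isWord_iff u v he, coe_image, Set.mem_image, mem_coe,
      Prod.mk.injEq]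
    constructor
    · rintro ⟨rfl, hadm, rfl⟩
      exact ⟨S2, hadm, rfl, rfl, rfl⟩
    · rintro ⟨t, hadm, rfl, rfl, rfl⟩
      exact ⟨rfl, hadm, rfl⟩
  rw [hset, Set.ncard_coe_finset, card_image_of_injective _ fun t t' h => congrArg (·.2.1) h,
    admissibleSet, card_filter_powerset_even_or_even_card_add]

end Words

theorem theorem1_b_general (n : ℕ) (u v : Fin n → Fin 4)
    (x1 x2 x3 x4 : ℕ)
    (hx : (x1, x2, x3, x4) = (0, 1, 0, 0) ∨ (x1, x2, x3, x4) = (1, 0, 0, 0)) :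
    ((wordSet u v x1 x2 x3 x4).ncard : ℝ) = ((rho1 u v)⁻¹) ^ 2 ∧
    ∀ S1 S2 S3 : Finset (Fin n), IsWord u v S1 S2 S3 x1 x2 x3 x4 →
      |Vval u v S1 S2 S3 x1 x2 x3 x4| = rho1 u v ∧
      wordLength S1 S2 S3 x1 x2 x3 x4 = len1 u v + 1 := by
  obtain ⟨he, rfl, rfl, rfl⟩ : x1 ≤ 1 ∧ x2 = 1 - x1 ∧ x3 = 0 ∧ x4 = 0 := by
    rcases hx with h | h <;> simp only [Prod.mk.injEq] at h <;> omega
  refine ⟨?_, fun S1 S2 S3 hw => ⟨abs_Vval_of_isWord u v he hw, wordLength_of_isWord u v he hw⟩⟩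
  rw [ncard_wordSet u v he, rho1_eq, inv_inv, ← pow_mul, mul_comm, pow_mul]
  norm_num

/-- Theorem 1(b): for x = 0100 and x = 1000 there are ρ₁⁻² words of type x; every
such word has aliasing index ρ₁ and length l₁ + 1. -/
theorem theorem1_b (n : ℕ) (hn : 1 ≤ n) (u v : Fin n → Fin 4)
    (x1 x2 x3 x4 : ℕ)
    (hx : (x1, x2, x3, x4) = (0, 1, 0, 0) ∨ (x1, x2, x3, x4) = (1, 0, 0, 0)) :
    ((wordSet u v x1 x2 x3 x4).ncard : ℝ) = ((rho1 u v)⁻¹) ^ 2 ∧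
    ∀ S1 S2 S3 : Finset (Fin n), IsWord u v S1 S2 S3 x1 x2 x3 x4 →
      |Vval u v S1 S2 S3 x1 x2 x3 x4| = rho1 u v ∧
      wordLength S1 S2 S3 x1 x2 x3 x4 = len1 u v + 1 :=
  theorem1_b_general n u v x1 x2 x3 x4 hx
end
end

section
/- (Theorem 1(c)) For x = 0001 as well as for x = 0010, the number of triples (S_1,S_2,S_3) of pairwise disjoint subsets of {1,…,n} that are words of type x equals ρ_2^{−2}; moreover every such word has aliasing index |V(x)| = ρ_2 and length m + X = l_2 + 1. -/
open Real Finset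

noncomputable section

local notation "s2" => Real.sqrt 2
open Complex in
lemma expI (k : ℕ) : Complex.exp ((k:ℂ) * ((π:ℂ)/2) * Complex.I) = Complex.I ^ k := by
  rw [mul_assoc, Complex.exp_nat_mul]
  congr 1
  rw [show ((π:ℂ)/2) * Complex.I = ((π/2 : ℝ):ℂ) * Complex.I by push_cast; ring,
    Complex.exp_mul_I]
  simp [← Complex.ofReal_cos, ← Complex.ofReal_sin]

lemma sin0 : Real.sin (trigArg 0) = s2/2 := by simp [trigArg, Real.sin_pi_div_four]
lemma cos0 : Real.cos (trigArg 0) = s2/2 := by simp [trigArg, Real.cos_pi_div_four]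
lemma sin1 : Real.sin (trigArg 1) = s2/2 := by
  rw [trigArg, show π/4 + π/2*1 = π/4 + π/2 by ring, Real.sin_add_pi_div_two, Real.cos_pi_div_four]
lemma cos1 : Real.cos (trigArg 1) = -(s2/2) := by
  rw [trigArg, show π/4 + π/2*1 = π/4 + π/2 by ring, Real.cos_add_pi_div_two, Real.sin_pi_div_four]
lemma sin2 : Real.sin (trigArg 2) = -(s2/2) := by
  rw [trigArg, show π/4 + π/2*2 = π/4 + π by ring, Real.sin_add_pi, Real.sin_pi_div_four]
lemma cos2 : Real.cos (trigArg 2) = -(s2/2) := by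
  rw [trigArg, show π/4 + π/2*2 = π/4 + π by ring, Real.cos_add_pi, Real.cos_pi_div_four]
lemma sin3 : Real.sin (trigArg 3) = -(s2/2) := by
  rw [trigArg, show π/4 + π/2*3 = (π/4 + π) + π/2 by ring, Real.sin_add_pi_div_two,
    Real.cos_add_pi, Real.cos_pi_div_four]
lemma cos3 : Real.cos (trigArg 3) = s2/2 := by
  rw [trigArg, show π/4 + π/2*3 = (π/4 + π) + π/2 by ring, Real.cos_add_pi_div_two,
    Real.sin_add_pi, Real.sin_pi_div_four]; ring
open Complex in
lemma onePlusI : (1 + Complex.I) = (s2:ℂ) * Complex.exp (((π/4:ℝ):ℂ) * Complex.I) := by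
  rw [Complex.exp_mul_I, ← Complex.ofReal_cos, ← Complex.ofReal_sin,
    Real.cos_pi_div_four, Real.sin_pi_div_four]
  have h2 : (s2:ℝ) * (s2/2) = 1 := by
    rw [show s2*(s2/2) = s2*s2/2 by ring, Real.mul_self_sqrt (by norm_num)]; norm_num
  push_cast
  ring_nf
  rw [show ((s2:ℂ))^2 = ((s2^2 : ℝ):ℂ) by push_cast; ring, Real.sq_sqrt (by norm_num)]
  push_cast; ring

open Complex in
lemma oneSubI : (1 - Complex.I) = (s2:ℂ) * Complex.exp (((-(π/4):ℝ):ℂ) * Complex.I) := by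
  rw [Complex.exp_mul_I, ← Complex.ofReal_cos, ← Complex.ofReal_sin,
    Real.cos_neg, Real.sin_neg, Real.cos_pi_div_four, Real.sin_pi_div_four]
  push_cast
  ring_nf
  rw [show ((s2:ℂ))^2 = ((s2^2 : ℝ):ℂ) by push_cast; ring, Real.sq_sqrt (by norm_num)]
  push_cast; ring

open Complex in
lemma prodPower (a b : ℕ) :
    ((1+Complex.I)^a * (1-Complex.I)^b) = ((s2:ℂ))^(a+b) *
      Complex.exp ((((a:ℝ)-(b:ℝ))*(π/4):ℂ) * Complex.I) := by
  rw [onePlusI, oneSubI, mul_pow, mul_pow, ← Complex.exp_nat_mul, ← Complex.exp_nat_mul]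
  rw [mul_mul_mul_comm, ← Complex.exp_add, pow_add]
  congr 1
  push_cast; ring
lemma cosk (k : ℤ) :
    (k % 2 = 1 → |Real.cos ((k:ℝ)*(π/4))| = s2/2) ∧
    (k % 4 = 0 → |Real.cos ((k:ℝ)*(π/4))| = 1) ∧
    (k % 4 = 2 → Real.cos ((k:ℝ)*(π/4)) = 0) := by
  have key : Real.cos ((k:ℝ)*(π/4)) = Real.cos (((k % 8 : ℤ):ℝ)*(π/4)) := by
    conv_lhs => rw [show k = 8*(k/8) + k % 8 from (Int.mul_ediv_add_emod k 8).symm]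
    push_cast
    rw [show ((8:ℝ)*(k/8 : ℤ) + (k%8 : ℤ))*(π/4) = ((k%8:ℤ):ℝ)*(π/4) + (k/8:ℤ)*(2*π) by ring]
    rw [Real.cos_add_int_mul_two_pi]
  have h2 : k % 2 = (k % 8) % 2 := by omega
  have h4 : k % 4 = (k % 8) % 4 := by omega
  rw [key, h2, h4]
  have hr : 0 ≤ k % 8 ∧ k % 8 < 8 := ⟨Int.emod_nonneg k (by norm_num), Int.emod_lt_of_pos k (by norm_num)⟩
  set r := k % 8 with hrdef
  clear_value r
  obtain ⟨h0, h8⟩ := hr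
  have hs : (0:ℝ) < s2/2 := by positivity
  interval_cases r
  · norm_num
  · norm_num [Real.cos_pi_div_four, abs_of_pos hs]
  · rw [show ((2:ℤ):ℝ)*(π/4) = π/2 by push_cast; ring]
    norm_num [Real.cos_pi_div_two]
  · rw [show ((3:ℤ):ℝ)*(π/4) = π - π/4 by push_cast; ring]
    norm_num [Real.cos_pi_sub, Real.cos_pi_div_four, abs_of_pos hs]
  · rw [show ((4:ℤ):ℝ)*(π/4) = π by push_cast; ring]
    norm_num [Real.cos_pi]
  · rw [show ((5:ℤ):ℝ)*(π/4) = π/4 + π by push_cast; ring]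
    norm_num [Real.cos_add_pi, Real.cos_pi_div_four, abs_of_pos hs]
  · rw [show ((6:ℤ):ℝ)*(π/4) = π/2 + π by push_cast; ring]
    norm_num [Real.cos_add_pi, Real.cos_pi_div_two]
  · rw [show ((7:ℤ):ℝ)*(π/4) = 2*π - π/4 by push_cast; ring]
    norm_num [Real.cos_two_pi_sub, Real.cos_pi_div_four, abs_of_pos hs]

namespace Thm1c
open Complex
variable {n : ℕ} (v : Fin n → Fin 4) (S1 S2 S3 : Finset (Fin n))

/-- per-coordinate real weight -/
def psiF (j : Fin n) (t : Fin 4) : ℝ :=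
  if j ∈ S1 then Real.sin (trigArg ((t:ℕ):ℝ)) * Real.cos (trigArg ((t:ℕ):ℝ))
  else if j ∈ S2 then Real.cos (trigArg ((t:ℕ):ℝ))
  else if j ∈ S3 then Real.sin (trigArg ((t:ℕ):ℝ))
  else 1

/-- per-coordinate complex factor -/
def Fc (j : Fin n) (t : Fin 4) : ℂ :=
  Complex.I ^ ((t:ℕ) * (v j : ℕ)) * ((psiF S1 S2 S3 j t : ℝ) : ℂ)

lemma psi_eq (hD : PairwiseDisj S1 S2 S3) (a : Fin n → Fin 4) :
    psi S1 S2 S3 a = ∏ j, psiF S1 S2 S3 j (a j) := by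
  obtain ⟨h12, h13, h23⟩ := hD
  have hsub : S1 ∪ S2 ∪ S3 ⊆ univ := subset_univ _
  rw [← Finset.prod_sdiff hsub]
  have h1 : ∏ j ∈ univ \ (S1 ∪ S2 ∪ S3), psiF S1 S2 S3 j (a j) = 1 := by
    apply Finset.prod_eq_one
    intro j hj
    simp only [mem_sdiff, mem_union, not_or] at hj
    simp [psiF, hj.2.1.1, hj.2.1.2, hj.2.2]
  rw [h1, one_mul, Finset.prod_union (by
        rw [Finset.disjoint_union_left]; exact ⟨h13, h23⟩),
    Finset.prod_union h12]
  unfold psi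
  congr 1
  · congr 1
    · exact Finset.prod_congr rfl fun j hj => by simp [psiF, hj]
    · exact Finset.prod_congr rfl fun j hj => by
        simp [psiF, hj, Finset.disjoint_right.mp h12 hj]
  · exact Finset.prod_congr rfl fun j hj => by
      simp [psiF, hj, Finset.disjoint_right.mp h13 hj, Finset.disjoint_right.mp h23 hj]

lemma prod_Fc (hD : PairwiseDisj S1 S2 S3) (a : Fin n → Fin 4) :
    ∏ j, Fc v S1 S2 S3 j (a j)
      = Complex.I ^ (∑ j, (a j : ℕ) * (v j : ℕ)) * ((psi S1 S2 S3 a : ℝ) : ℂ) := by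
  unfold Fc
  rw [Finset.prod_mul_distrib, Finset.prod_pow_eq_pow_sum, ← Complex.ofReal_prod,
    psi_eq _ _ _ hD]

lemma dotR_eq (a : Fin n → Fin 4) :
    dotR a v = ((∑ j, (a j : ℕ) * (v j : ℕ) : ℕ) : ℝ) := by
  unfold dotR; push_cast; ring

lemma point_re (hD : PairwiseDisj S1 S2 S3) (θ : ℝ) (a : Fin n → Fin 4) :
    (Complex.exp ((θ:ℂ) * Complex.I) * ∏ j, Fc v S1 S2 S3 j (a j)).re
      = Real.cos (θ + π/2 * ((∑ j, (a j : ℕ) * (v j : ℕ) : ℕ) : ℝ)) * psi S1 S2 S3 a := by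
  rw [prod_Fc _ _ _ _ hD]
  set D : ℕ := ∑ j, (a j : ℕ) * (v j : ℕ)
  rw [← expI D, ← mul_assoc, ← Complex.exp_add]
  have : (θ:ℂ) * Complex.I + (D:ℂ) * ((π:ℂ)/2) * Complex.I
      = ((θ + π/2 * (D:ℝ) : ℝ) : ℂ) * Complex.I := by push_cast; ring
  rw [this, mul_comm, Complex.re_ofReal_mul, Complex.exp_ofReal_mul_I_re, mul_comm]
end Thm1c
namespace Thm1c
open Complex
variable {n : ℕ} (v : Fin n → Fin 4) (S1 S2 S3 : Finset (Fin n))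

/-- the value of the per-coordinate sum -/
def hval (j : Fin n) : ℂ :=
  if j ∈ S1 then (if v j = 2 then 2 else 0)
  else if j ∈ S2 then
    (if v j = 1 then (s2:ℂ)*(1-Complex.I) else if v j = 3 then (s2:ℂ)*(1+Complex.I) else 0)
  else if j ∈ S3 then
    (if v j = 1 then (s2:ℂ)*(1+Complex.I) else if v j = 3 then (s2:ℂ)*(1-Complex.I) else 0)
  else (if v j = 0 then 4 else 0)

lemma s2sq : (s2:ℝ) * s2 = 2 := Real.mul_self_sqrt (by norm_num)

lemma cast3 : (((3 : Fin 4):ℕ):ℝ) = 3 := by norm_num [show ((3:Fin 4):ℕ) = 3 from rfl]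
lemma cast2 : (((2 : Fin 4):ℕ):ℝ) = 2 := by norm_num [show ((2:Fin 4):ℕ) = 2 from rfl]
lemma cast1 : (((1 : Fin 4):ℕ):ℝ) = 1 := by norm_num [show ((1:Fin 4):ℕ) = 1 from rfl]
lemma cast0 : (((0 : Fin 4):ℕ):ℝ) = 0 := by norm_num [show ((0:Fin 4):ℕ) = 0 from rfl]

lemma c0n : ((0 : Fin 4):ℕ) = 0 := rfl
lemma c1n : ((1 : Fin 4):ℕ) = 1 := rfl
lemma c2n : ((2 : Fin 4):ℕ) = 2 := rfl
lemma c3n : ((3 : Fin 4):ℕ) = 3 := rfl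

lemma hsC : ((s2:ℝ):ℂ) * ((s2:ℝ):ℂ) = 2 := by
  rw [← Complex.ofReal_mul, s2sq]; norm_num

open Complex in
lemma sumA (w : Fin 4) :
    ∑ t : Fin 4, Complex.I^((t:ℕ)*(w:ℕ))
        * ((Real.sin (trigArg ((t:ℕ):ℝ)) * Real.cos (trigArg ((t:ℕ):ℝ)) : ℝ):ℂ)
      = if w = 2 then 2 else 0 := by
  fin_cases w <;>
  · rw [Fin.sum_univ_four]
    simp only [cast0, cast1, cast2, cast3, sin0, cos0, sin1, cos1, sin2, cos2, sin3, cos3]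
    norm_num [c0n, c1n, c2n, c3n, Fin.ext_iff, pow_succ, Complex.I_sq, Complex.ext_iff]
    all_goals (try ring_nf)
    all_goals (try simp [Complex.I_sq, s2sq])
    all_goals (try ring_nf)

open Complex in
lemma sumB (w : Fin 4) :
    ∑ t : Fin 4, Complex.I^((t:ℕ)*(w:ℕ)) * ((Real.cos (trigArg ((t:ℕ):ℝ)) : ℝ):ℂ)
      = if w = 1 then (s2:ℂ)*(1-Complex.I) else if w = 3 then (s2:ℂ)*(1+Complex.I) else 0 := by
  fin_cases w <;>
  · rw [Fin.sum_univ_four]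
    simp only [cast0, cast1, cast2, cast3, cos0, cos1, cos2, cos3]
    norm_num [c0n, c1n, c2n, c3n, Fin.ext_iff, pow_succ, Complex.I_sq, Complex.ext_iff]
    all_goals (try ring_nf)
    all_goals (try simp [Complex.I_sq, s2sq])
    all_goals (try ring_nf)

open Complex in
lemma sumC (w : Fin 4) :
    ∑ t : Fin 4, Complex.I^((t:ℕ)*(w:ℕ)) * ((Real.sin (trigArg ((t:ℕ):ℝ)) : ℝ):ℂ)
      = if w = 1 then (s2:ℂ)*(1+Complex.I) else if w = 3 then (s2:ℂ)*(1-Complex.I) else 0 := by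
  fin_cases w <;>
  · rw [Fin.sum_univ_four]
    simp only [cast0, cast1, cast2, cast3, sin0, sin1, sin2, sin3]
    norm_num [c0n, c1n, c2n, c3n, Fin.ext_iff, pow_succ, Complex.I_sq, Complex.ext_iff]
    all_goals (try ring_nf)
    all_goals (try simp [Complex.I_sq, s2sq])
    all_goals (try ring_nf)

open Complex in
lemma sumD (w : Fin 4) :
    ∑ t : Fin 4, Complex.I^((t:ℕ)*(w:ℕ)) * (((1:ℝ)):ℂ)
      = if w = 0 then 4 else 0 := by
  fin_cases w <;>
  · rw [Fin.sum_univ_four]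
    norm_num [c0n, c1n, c2n, c3n, Fin.ext_iff, pow_succ, Complex.I_sq, Complex.ext_iff]

lemma h_eq (j : Fin n) : ∑ t : Fin 4, Fc v S1 S2 S3 j t = hval v S1 S2 S3 j := by
  unfold Fc psiF hval
  by_cases h1 : j ∈ S1 <;> by_cases h2 : j ∈ S2 <;> by_cases h3 : j ∈ S3 <;>
    simp only [h1, h2, h3, if_true, if_false] <;>
    first
      | exact sumA (v j)
      | exact sumB (v j)
      | exact sumC (v j)
      | exact sumD (v j)
end Thm1c
namespace Thm1c
open Complex
variable {n : ℕ} (u v : Fin n → Fin 4) (S1 S2 S3 : Finset (Fin n))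

def Cc (n : ℕ) (S1 S2 S3 : Finset (Fin n)) (X : ℕ) : ℝ :=
  (2:ℝ) ^ (((2 * S1.card + S2.card + S3.card + X : ℕ) : ℝ)/2 - 2*(n:ℝ))

lemma Cc_pos : 0 < Cc n S1 S2 S3 X := Real.rpow_pos_of_pos (by norm_num) _

lemma Vval_fact (hD : PairwiseDisj S1 S2 S3) (x3 x4 : ℕ)
    (hx : (x3, x4) = (0,1) ∨ (x3, x4) = (1,0)) :
    Vval u v S1 S2 S3 0 0 x3 x4
      = Cc n S1 S2 S3 1 *
        (Complex.exp (((if x4 = 1 then (π/4) else -(π/4) : ℝ):ℂ) * Complex.I) *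
          ∏ j, hval v S1 S2 S3 j).re := by
  have key : ∀ θ : ℝ, (Complex.exp ((θ:ℂ) * Complex.I) * ∏ j, hval v S1 S2 S3 j).re
      = ∑ a : Fin n → Fin 4,
          Real.cos (θ + π/2 * ((∑ j, (a j : ℕ) * (v j : ℕ) : ℕ) : ℝ)) * psi S1 S2 S3 a := by
    intro θ
    have : ∏ j, hval v S1 S2 S3 j = ∑ a : Fin n → Fin 4, ∏ j, Fc v S1 S2 S3 j (a j) := by
      rw [← funext fun j => h_eq v S1 S2 S3 j]
      rw [Finset.prod_univ_sum (fun _ => (univ : Finset (Fin 4))), Fintype.piFinset_univ]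
    rw [this, Finset.mul_sum, Complex.re_sum]
    exact Finset.sum_congr rfl fun a _ => point_re v S1 S2 S3 hD θ a
  rcases hx with h | h <;>
    [(obtain ⟨h3, h4⟩ := Prod.mk.injEq .. |>.mp h); (obtain ⟨h3, h4⟩ := Prod.mk.injEq .. |>.mp h)] <;>
    subst h3 <;> subst h4
  · rw [show (if (1:ℕ) = 1 then (π/4:ℝ) else -(π/4)) = π/4 from if_pos rfl, key (π/4)]
    unfold Vval phi Cc
    rw [Finset.mul_sum]
    refine Finset.sum_congr rfl fun a _ => ?_
    simp only [pow_zero, pow_one, one_mul]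
    rw [dotR_eq v]
    rw [show trigArg ((∑ j, ((a j : ℕ) * (v j : ℕ)) : ℕ):ℝ)
        = π/4 + π/2 * ((∑ j, ((a j : ℕ) * (v j : ℕ)) : ℕ):ℝ) from rfl]
    ring
  · rw [show (if (0:ℕ) = 1 then (π/4:ℝ) else -(π/4)) = -(π/4) from if_neg (by norm_num),
      key (-(π/4))]
    unfold Vval phi Cc
    rw [Finset.mul_sum]
    refine Finset.sum_congr rfl fun a _ => ?_
    simp only [pow_zero, pow_one, one_mul]
    rw [dotR_eq v]
    have : Real.cos (-(π/4) + π/2 * ((∑ j, ((a j : ℕ) * (v j : ℕ)) : ℕ):ℝ))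
        = Real.sin (trigArg ((∑ j, ((a j : ℕ) * (v j : ℕ)) : ℕ):ℝ)) := by
      rw [show (-(π/4) + π/2 * ((∑ j, ((a j : ℕ) * (v j : ℕ)) : ℕ):ℝ))
          = trigArg ((∑ j, ((a j : ℕ) * (v j : ℕ)) : ℕ):ℝ) - π/2 by unfold trigArg; ring]
      rw [Real.cos_sub_pi_div_two]
    rw [this]
    ring
end Thm1c
namespace Thm1c
open Complex
variable {n : ℕ} (v : Fin n → Fin 4) (S1 S2 S3 : Finset (Fin n))

def Oset : Finset (Fin n) := univ.filter (fun j => v j = 1 ∨ v j = 3)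
def Tset : Finset (Fin n) := univ.filter (fun j => v j = 2)
def Zset : Finset (Fin n) := univ.filter (fun j => v j = 0)

def Struct : Prop := S1 = Tset v ∧ S2 ⊆ Oset v ∧ S3 = Oset v \ S2

lemma s2ne : (s2:ℝ) ≠ 0 := by positivity
lemma s2neC : ((s2:ℝ):ℂ) ≠ 0 := Complex.ofReal_ne_zero.mpr s2ne
lemma onePlusI_ne : (1 + Complex.I) ≠ 0 := by
  simp [Complex.ext_iff]
lemma oneSubI_ne : (1 - Complex.I) ≠ 0 := by
  simp [Complex.ext_iff]

lemma struct_disj (h : Struct v S1 S2 S3) : PairwiseDisj S1 S2 S3 := by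
  obtain ⟨h1, h2, h3⟩ := h
  subst h1; subst h3
  refine ⟨?_, ?_, Finset.disjoint_sdiff⟩
  · rw [Finset.disjoint_left]
    intro j hj hj2
    have := h2 hj2
    simp [Tset, Oset] at hj this
    rcases this with h | h <;> simp [h] at hj
  · rw [Finset.disjoint_left]
    intro j hj hj2
    have := (Finset.mem_sdiff.mp hj2).1
    simp [Tset, Oset] at hj this
    rcases this with h | h <;> simp [h] at hj

lemma prod_ne_struct (hD : PairwiseDisj S1 S2 S3)
    (h : ∏ j, hval v S1 S2 S3 j ≠ 0) : Struct v S1 S2 S3 := by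
  obtain ⟨h12, h13, h23⟩ := hD
  rw [Finset.prod_ne_zero_iff] at h
  have hj : ∀ j : Fin n, hval v S1 S2 S3 j ≠ 0 := fun j => h j (mem_univ j)
  have key : ∀ j : Fin n,
      (j ∈ S1 → v j = 2) ∧ (j ∈ S2 → (v j = 1 ∨ v j = 3)) ∧
      (j ∈ S3 → (v j = 1 ∨ v j = 3)) ∧
      (j ∉ S1 → j ∉ S2 → j ∉ S3 → v j = 0) := by
    intro j
    have hh := hj j
    unfold hval at hh
    by_cases h1 : j ∈ S1
    · simp only [h1, if_true] at hh
      have hv : v j = 2 := by by_contra hc; simp [hc] at hh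
      exact ⟨fun _ => hv, fun h2 => absurd h2 (Finset.disjoint_left.mp h12 h1),
             fun h3 => absurd h3 (Finset.disjoint_left.mp h13 h1), fun c _ _ => absurd h1 c⟩
    · simp only [h1, if_false] at hh
      by_cases h2 : j ∈ S2
      · simp only [h2, if_true] at hh
        have hv : v j = 1 ∨ v j = 3 := by
          by_contra hc; push_neg at hc; simp [hc.1, hc.2] at hh
        exact ⟨fun c => absurd c h1, fun _ => hv,
               fun h3 => absurd h3 (Finset.disjoint_left.mp h23 h2), fun _ c _ => absurd h2 c⟩
      · simp only [h2, if_false] at hh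
        by_cases h3 : j ∈ S3
        · simp only [h3, if_true] at hh
          have hv : v j = 1 ∨ v j = 3 := by
            by_contra hc; push_neg at hc; simp [hc.1, hc.2] at hh
          exact ⟨fun c => absurd c h1, fun c => absurd c h2, fun _ => hv,
                 fun _ _ c => absurd h3 c⟩
        · simp only [h3, if_false] at hh
          have hv : v j = 0 := by by_contra hc; simp [hc] at hh
          exact ⟨fun c => absurd c h1, fun c => absurd c h2, fun c => absurd c h3,
                 fun _ _ _ => hv⟩
  refine ⟨?_, ?_, ?_⟩
  · ext j
    simp only [Tset, Finset.mem_filter, mem_univ, true_and]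
    constructor
    · exact (key j).1
    · intro hv
      by_contra h1
      by_cases h2 : j ∈ S2
      · rcases (key j).2.1 h2 with h' | h' <;> simp [h'] at hv
      by_cases h3 : j ∈ S3
      · rcases (key j).2.2.1 h3 with h' | h' <;> simp [h'] at hv
      · have := (key j).2.2.2 h1 h2 h3; simp [this] at hv
  · intro j hj2
    simp only [Oset, Finset.mem_filter, mem_univ, true_and]
    exact (key j).2.1 hj2
  · ext j
    simp only [Oset, Finset.mem_sdiff, Finset.mem_filter, mem_univ, true_and]
    constructor
    · intro h3
      exact ⟨(key j).2.2.1 h3, Finset.disjoint_right.mp h23 h3⟩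
    · rintro ⟨hv, h2⟩
      by_contra h3
      have h1 : j ∉ S1 := by
        intro h1; rcases hv with h' | h' <;> simp [(key j).1 h1] at h' <;> omega
      have := (key j).2.2.2 h1 h2 h3
      rcases hv with h' | h' <;> rw [this] at h' <;> exact absurd h' (by decide)
end Thm1c
namespace Thm1c
open Complex
variable {n : ℕ} (v : Fin n → Fin 4) (S1 S2 S3 : Finset (Fin n))

def Aset (S2 : Finset (Fin n)) : Finset (Fin n) :=
  (Oset v).filter (fun j => (j ∈ S2 ∧ v j = 3) ∨ (j ∉ S2 ∧ v j = 1))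

lemma Aset_subset : Aset v S2 ⊆ Oset v := Finset.filter_subset _ _

lemma univ_partition :
    (univ : Finset (Fin n)) = (Zset v ∪ Tset v) ∪ Oset v ∧
    Disjoint (Zset v) (Tset v) ∧ Disjoint (Zset v ∪ Tset v) (Oset v) := by
  refine ⟨?_, ?_, ?_⟩
  · ext j
    simp only [mem_univ, true_iff, Finset.mem_union, Zset, Tset, Oset,
      Finset.mem_filter, mem_univ, true_and]
    have : ∀ w : Fin 4, (w = 0 ∨ w = 2) ∨ (w = 1 ∨ w = 3) := by decide
    exact this (v j)
  · rw [Finset.disjoint_left]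
    intro j hj hj'
    simp [Zset, Tset] at hj hj'
    rw [hj] at hj'; exact absurd hj' (by decide)
  · rw [Finset.disjoint_left]
    intro j hj hj'
    simp [Zset, Tset, Oset] at hj hj'
    rcases hj with h | h <;> rcases hj' with h' | h' <;> rw [h] at h' <;>
      exact absurd h' (by decide)

lemma card_partition : (Zset v).card + (Tset v).card + (Oset v).card = n := by
  obtain ⟨hu, d1, d2⟩ := univ_partition v
  have := congrArg Finset.card hu
  rw [Finset.card_univ, Fintype.card_fin, Finset.card_union_of_disjoint d2,
    Finset.card_union_of_disjoint d1] at this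
  omega

lemma prod_hval (h : Struct v S1 S2 S3) :
    ∏ j, hval v S1 S2 S3 j
      = (4:ℂ)^(Zset v).card * 2^(Tset v).card * ((s2:ℝ):ℂ)^(Oset v).card
        * (1+Complex.I)^(Aset v S2).card
        * (1-Complex.I)^((Oset v \ Aset v S2).card) := by
  obtain ⟨hu, d1, d2⟩ := univ_partition v
  obtain ⟨h1, h2, h3⟩ := h
  have hS1T : ∀ j, (j ∈ S1 ↔ j ∈ Tset v) := fun j => by rw [h1]
  rw [show (univ : Finset (Fin n)) = (Zset v ∪ Tset v) ∪ Oset v from hu,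
    Finset.prod_union d2, Finset.prod_union d1]
  have pZ : ∏ j ∈ Zset v, hval v S1 S2 S3 j = (4:ℂ)^(Zset v).card := by
    rw [Finset.prod_congr rfl (fun j hj => ?_), Finset.prod_const]
    simp only [Zset, Finset.mem_filter, mem_univ, true_and] at hj
    have n1 : j ∉ S1 := by rw [h1]; simp [Tset, hj]
    have n2 : j ∉ S2 := fun c => by have := h2 c; simp [Oset, hj] at this
    have n3 : j ∉ S3 := by rw [h3]; intro c; exact n2 (absurd ((Finset.mem_sdiff.mp c).1) (by
      simp [Oset, hj]))
    simp [hval, n1, n2, n3, hj]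
  have pT : ∏ j ∈ Tset v, hval v S1 S2 S3 j = (2:ℂ)^(Tset v).card := by
    rw [Finset.prod_congr rfl (fun j hj => ?_), Finset.prod_const]
    have hm : j ∈ S1 := by rw [h1]; exact hj
    simp only [Tset, Finset.mem_filter, mem_univ, true_and] at hj
    simp [hval, hm, hj]
  have pO : ∏ j ∈ Oset v, hval v S1 S2 S3 j
      = ((s2:ℝ):ℂ)^(Oset v).card * (1+Complex.I)^(Aset v S2).card
        * (1-Complex.I)^((Oset v \ Aset v S2).card) := by
    have step : ∀ j ∈ Oset v, hval v S1 S2 S3 j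
        = ((s2:ℝ):ℂ) * (if (j ∈ S2 ∧ v j = 3) ∨ (j ∉ S2 ∧ v j = 1)
            then (1+Complex.I) else (1-Complex.I)) := by
      intro j hj
      have hvj : v j = 1 ∨ v j = 3 := by
        simpa [Oset] using hj
      have n1 : j ∉ S1 := by
        rw [h1]; simp only [Tset, Finset.mem_filter, mem_univ, true_and]
        rcases hvj with h | h <;> simp [h]
      by_cases h2' : j ∈ S2
      · rcases hvj with h | h <;> simp [hval, n1, h2', h]
      · have h3' : j ∈ S3 := by
          rw [h3]; exact Finset.mem_sdiff.mpr ⟨hj, h2'⟩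
        rcases hvj with h | h <;> simp [hval, n1, h2', h3', h]
    rw [Finset.prod_congr rfl step, Finset.prod_mul_distrib, Finset.prod_const,
      Finset.prod_ite, Finset.prod_const, Finset.prod_const]
    rw [show filter (fun x => ¬(x ∈ S2 ∧ v x = 3 ∨ x ∉ S2 ∧ v x = 1)) (Oset v)
        = Oset v \ Aset v S2 from by rw [Finset.filter_not]; rfl]
    rw [show filter (fun x => x ∈ S2 ∧ v x = 3 ∨ x ∉ S2 ∧ v x = 1) (Oset v) = Aset v S2 from rfl]
    ring
  rw [pZ, pT, pO]
  ring
end Thm1c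
namespace Thm1c
open Complex
variable {n : ℕ} (v : Fin n → Fin 4) (S1 S2 S3 : Finset (Fin n))

/-- The integer phase index. -/
def kInt (v : Fin n → Fin 4) (S2 : Finset (Fin n)) (e1 : ℕ) : ℤ :=
  2*((Aset v S2).card + e1) - ((Oset v).card + 1)

lemma Acard_rel : (Aset v S2).card + (Oset v \ Aset v S2).card = (Oset v).card := by
  rw [Finset.card_sdiff_of_subset (Aset_subset v S2)]
  have := Finset.card_le_card (Aset_subset v S2)
  omega

lemma hs2C : ((s2:ℝ):ℂ)^2 = 2 := by
  rw [show ((s2:ℝ):ℂ)^2 = ((s2^2:ℝ):ℂ) by push_cast; ring, Real.sq_sqrt (by norm_num)]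
  norm_num

lemma W_main (z t N a b : ℕ) (hab : a + b = N) (w : ℂ) (a' b' : ℕ)
    (hw : w * ((s2:ℝ):ℂ) * ((1+Complex.I)^a * (1-Complex.I)^b)
      = (1+Complex.I)^a' * (1-Complex.I)^b')
    (hab' : a' + b' = N + 1) :
    (w * ((4:ℂ)^z * 2^t * ((s2:ℝ):ℂ)^N * (1+Complex.I)^a * (1-Complex.I)^b)).re
      = (4:ℝ)^z * 2^t * 2^N * Real.cos (((((a':ℤ) - (b':ℤ)):ℤ):ℝ) * (π/4)) := by
  have hsN : ((s2:ℝ):ℂ)^N * ((s2:ℝ):ℂ)^(N+1) = 2^N * ((s2:ℝ):ℂ) := by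
    rw [pow_succ, ← mul_assoc, ← pow_add, show N + N = 2*N by ring, pow_mul, hs2C]
  have harg : ((((a':ℝ):ℂ)-((b':ℝ):ℂ))*(((π:ℝ):ℂ)/4))
      = (((((a':ℤ) - (b':ℤ)):ℤ):ℝ) * (π/4) : ℝ) := by push_cast; try ring
  have hC : w * ((4:ℂ)^z * 2^t * ((s2:ℝ):ℂ)^N * (1+Complex.I)^a * (1-Complex.I)^b)
      = ((((4:ℝ)^z * 2^t * 2^N : ℝ)):ℂ)
        * Complex.exp ((((((a':ℤ) - (b':ℤ)):ℤ):ℝ) * (π/4) : ℝ) * Complex.I) := by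
    apply mul_right_cancel₀ s2neC
    calc w * ((4:ℂ)^z * 2^t * ((s2:ℝ):ℂ)^N * (1+Complex.I)^a * (1-Complex.I)^b) * ((s2:ℝ):ℂ)
        = (4:ℂ)^z * 2^t * ((s2:ℝ):ℂ)^N
            * (w * ((s2:ℝ):ℂ) * ((1+Complex.I)^a * (1-Complex.I)^b)) := by ring
      _ = (4:ℂ)^z * 2^t * ((s2:ℝ):ℂ)^N * ((1+Complex.I)^a' * (1-Complex.I)^b') := by rw [hw]
      _ = (4:ℂ)^z * 2^t * ((s2:ℝ):ℂ)^N * (((s2:ℝ):ℂ)^(a'+b')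
            * Complex.exp (((((a':ℝ):ℂ)-((b':ℝ):ℂ))*(((π:ℝ):ℂ)/4)) * Complex.I)) := by
          rw [prodPower a' b']
      _ = ((((4:ℝ)^z * 2^t * 2^N : ℝ)):ℂ)
            * Complex.exp ((((((a':ℤ) - (b':ℤ)):ℤ):ℝ) * (π/4) : ℝ) * Complex.I)
            * ((s2:ℝ):ℂ) := by
          rw [hab', harg]
          rw [show (4:ℂ)^z * 2^t * ((s2:ℝ):ℂ)^N * (((s2:ℝ):ℂ)^(N+1) * Complex.exp _)
              = (4:ℂ)^z * 2^t * (((s2:ℝ):ℂ)^N * ((s2:ℝ):ℂ)^(N+1)) * Complex.exp _ from by ring,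
            hsN]
          push_cast
          ring
  rw [hC, mul_assoc, Complex.re_ofReal_mul, Complex.exp_ofReal_mul_I_re]
end Thm1c
namespace Thm1c
open Complex
variable {n : ℕ} (u v : Fin n → Fin 4) (S1 S2 S3 : Finset (Fin n))

lemma Vval_struct (h : Struct v S1 S2 S3) (x3 x4 : ℕ)
    (hx : (x3, x4) = (0,1) ∨ (x3, x4) = (1,0)) :
    Vval u v S1 S2 S3 0 0 x3 x4
      = Cc n S1 S2 S3 1 * ((4:ℝ)^(Zset v).card * 2^(Tset v).card * 2^(Oset v).card
          * Real.cos (((kInt v S2 x4 : ℤ):ℝ) * (π/4))) := by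
  rw [Vval_fact u v S1 S2 S3 (struct_disj v S1 S2 S3 h) x3 x4 hx,
    prod_hval v S1 S2 S3 h]
  congr 1
  have hab := Acard_rel v S2
  set a := (Aset v S2).card
  set b := (Oset v \ Aset v S2).card
  set N := (Oset v).card
  rcases hx with hx | hx <;> obtain ⟨h3, h4⟩ := Prod.mk.injEq .. |>.mp hx <;>
    subst h3 <;> subst h4
  · rw [show (if (1:ℕ) = 1 then (π/4:ℝ) else -(π/4)) = π/4 from if_pos rfl]
    have hw : Complex.exp (((π/4:ℝ):ℂ) * Complex.I) * ((s2:ℝ):ℂ)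
        * ((1+Complex.I)^a * (1-Complex.I)^b)
        = (1+Complex.I)^(a+1) * (1-Complex.I)^b := by
      rw [pow_succ, onePlusI]; ring
    have := W_main (Zset v).card (Tset v).card N a b hab _ (a+1) b hw (by omega)
    rw [this]
    congr 2
    have : ((a:ℤ)+1) - (b:ℤ) = kInt v S2 1 := by unfold kInt; omega
    rw [← this]
    push_cast; ring
  · rw [show (if (0:ℕ) = 1 then (π/4:ℝ) else -(π/4)) = -(π/4) from if_neg (by norm_num)]
    have hw : Complex.exp (((-(π/4):ℝ):ℂ) * Complex.I) * ((s2:ℝ):ℂ)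
        * ((1+Complex.I)^a * (1-Complex.I)^b)
        = (1+Complex.I)^a * (1-Complex.I)^(b+1) := by
      rw [pow_succ (1-Complex.I), oneSubI]; ring
    have := W_main (Zset v).card (Tset v).card N a b hab _ a (b+1) hw (by omega)
    rw [this]
    congr 2
    have : (a:ℤ) - ((b:ℤ)+1) = kInt v S2 0 := by unfold kInt; omega
    rw [← this]
    push_cast; ring

lemma Vval_abs (h : Struct v S1 S2 S3) (x3 x4 : ℕ)
    (hx : (x3, x4) = (0,1) ∨ (x3, x4) = (1,0)) :
    |Vval u v S1 S2 S3 0 0 x3 x4|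
      = Cc n S1 S2 S3 1 * ((4:ℝ)^(Zset v).card * 2^(Tset v).card * 2^(Oset v).card
          * |Real.cos (((kInt v S2 x4 : ℤ):ℝ) * (π/4))|) := by
  rw [Vval_struct u v S1 S2 S3 h x3 x4 hx, abs_mul, abs_mul,
    abs_of_pos (Cc_pos S1 S2 S3), abs_of_pos (by positivity : (0:ℝ) < (4:ℝ)^(Zset v).card * 2^(Tset v).card * 2^(Oset v).card)]

lemma Vval_ne_iff (h : Struct v S1 S2 S3) (x3 x4 : ℕ)
    (hx : (x3, x4) = (0,1) ∨ (x3, x4) = (1,0)) :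
    Vval u v S1 S2 S3 0 0 x3 x4 ≠ 0
      ↔ Real.cos (((kInt v S2 x4 : ℤ):ℝ) * (π/4)) ≠ 0 := by
  rw [Vval_struct u v S1 S2 S3 h x3 x4 hx]
  constructor
  · intro hne hc; rw [hc] at hne; simp at hne
  · intro hc hne
    have h1 : Cc n S1 S2 S3 1 ≠ 0 := ne_of_gt (Cc_pos S1 S2 S3)
    have h2 : (4:ℝ)^(Zset v).card * 2^(Tset v).card * 2^(Oset v).card ≠ 0 := by positivity
    rcases mul_eq_zero.mp hne with h | h
    · exact h1 h
    · rcases mul_eq_zero.mp h with h' | h'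
      · exact h2 h'
      · exact hc h'
end Thm1c
namespace Thm1c
open Complex
variable {n : ℕ} (u v : Fin n → Fin 4) (S1 S2 S3 : Finset (Fin n))

lemma cos_ne_iff (k : ℤ) : Real.cos ((k:ℝ)*(π/4)) ≠ 0 ↔ k % 4 ≠ 2 := by
  obtain ⟨h1, h2, h3⟩ := cosk k
  constructor
  · intro hc h4; exact hc (h3 h4)
  · intro h4
    have : k % 4 = 0 ∨ k % 4 = 1 ∨ k % 4 = 3 := by omega
    rcases this with h | h | h
    · have h2' := h2 h; intro hc; rw [hc] at h2'; simp at h2'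
    · have := h1 (by omega)
      intro hc; rw [hc] at this; simp at this
      exact absurd this.symm (ne_of_gt (by positivity))
    · have := h1 (by omega)
      intro hc; rw [hc] at this; simp at this
      exact absurd this.symm (ne_of_gt (by positivity))

lemma isWord_iff (h3 h4 : ℕ) (hx : (h3, h4) = (0,1) ∨ (h3, h4) = (1,0)) :
    IsWord u v S1 S2 S3 0 0 h3 h4
      ↔ Struct v S1 S2 S3 ∧ kInt v S2 h4 % 4 ≠ 2 := by
  constructor
  · rintro ⟨hD, hV⟩
    have hprod : ∏ j, hval v S1 S2 S3 j ≠ 0 := by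
      intro hz
      apply hV
      rw [Vval_fact u v S1 S2 S3 hD h3 h4 hx, hz, mul_zero]
      simp
    have hS := prod_ne_struct v S1 S2 S3 hD hprod
    refine ⟨hS, ?_⟩
    rw [← cos_ne_iff]
    exact (Vval_ne_iff u v S1 S2 S3 hS h3 h4 hx).mp hV
  · rintro ⟨hS, hk⟩
    exact ⟨struct_disj v S1 S2 S3 hS,
      (Vval_ne_iff u v S1 S2 S3 hS h3 h4 hx).mpr ((cos_ne_iff _).mpr hk)⟩

def good (v : Fin n → Fin 4) (x4 : ℕ) : Finset (Finset (Fin n)) :=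
  (Oset v).powerset.filter (fun S => kInt v S x4 % 4 ≠ 2)

lemma wordSet_eq (h3 h4 : ℕ) (hx : (h3, h4) = (0,1) ∨ (h3, h4) = (1,0)) :
    wordSet u v 0 0 h3 h4
      = ↑((good v h4).image (fun S => (Tset v, S, Oset v \ S))) := by
  ext ⟨T1, T2, T3⟩
  simp only [wordSet, Set.mem_setOf_eq, Finset.coe_image, Set.mem_image, Finset.mem_coe,
    Finset.mem_filter, good, Finset.mem_powerset]
  rw [isWord_iff u v T1 T2 T3 h3 h4 hx]
  constructor
  · rintro ⟨⟨hs1, hs2, hs3⟩, hk⟩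
    exact ⟨T2, ⟨hs2, hk⟩, by rw [← hs1, ← hs3]⟩
  · rintro ⟨S, ⟨hsub, hk⟩, heq⟩
    obtain ⟨e1, e23⟩ := Prod.mk.injEq .. |>.mp heq.symm
    obtain ⟨e2, e3⟩ := Prod.mk.injEq .. |>.mp e23
    subst e1; subst e2; subst e3
    exact ⟨⟨rfl, hsub, rfl⟩, hk⟩
end Thm1c
namespace Thm1c
open Complex
variable {n : ℕ} (u v : Fin n → Fin 4)

lemma count_parity {α : Type*} [DecidableEq α] (O : Finset α) (hO : O.Nonempty) (c : ℕ) :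
    (O.powerset.filter (fun S => S.card % 2 = c % 2)).card = 2^(O.card - 1) := by
  set E := O.powerset.filter (fun S => S.card % 2 = 0) with hE
  set D := O.powerset.filter (fun S => ¬ S.card % 2 = 0) with hD
  have hsum : ∑ S ∈ O.powerset, (-1:ℤ)^S.card = 0 := by
    rw [Finset.sum_powerset_neg_one_pow_card, if_neg (Finset.nonempty_iff_ne_empty.mp hO)]
  have hsplit : (E.card : ℤ) - D.card = 0 := by
    have h1 : ∑ S ∈ E, (-1:ℤ)^S.card = E.card := by
      have hone : ∀ S ∈ E, (-1:ℤ)^S.card = 1 := fun S hS =>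
        Even.neg_one_pow (Nat.even_iff.mpr ((Finset.mem_filter.mp hS).2))
      rw [Finset.sum_congr rfl hone, Finset.sum_const, nsmul_eq_mul, mul_one]
    have h2 : ∑ S ∈ D, (-1:ℤ)^S.card = -(D.card:ℤ) := by
      have hone : ∀ S ∈ D, (-1:ℤ)^S.card = -1 := fun S hS =>
        Odd.neg_one_pow (Nat.odd_iff.mpr (by
          have := (Finset.mem_filter.mp hS).2; omega))
      rw [Finset.sum_congr rfl hone, Finset.sum_const, nsmul_eq_mul, mul_neg_one]
    have hsf := Finset.sum_filter_add_sum_filter_not O.powerset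
      (fun S => S.card % 2 = 0) (fun S => (-1:ℤ)^S.card)
    rw [← hE, ← hD, h1, h2, hsum] at hsf
    omega
  have hED : E.card + D.card = 2^O.card := by
    rw [hE, hD, Finset.card_filter_add_card_filter_not, Finset.card_powerset]
  have hcard1 : 1 ≤ O.card := Finset.card_pos.mpr hO
  have hpow : 2^O.card = 2 * 2^(O.card - 1) := by
    rw [← pow_succ']; congr 1; omega
  have hEeq : E.card = 2^(O.card - 1) := by omega
  have hDeq : D.card = 2^(O.card - 1) := by omega
  rcases Nat.even_or_odd c with hc | hc
  · rw [← hEeq]; congr 1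
    apply Finset.filter_congr
    intro S _
    simp only [Nat.even_iff.mp hc]
  · rw [← hDeq]; congr 1
    apply Finset.filter_congr
    intro S _
    simp only [Nat.odd_iff.mp hc]
    constructor
    · intro h; omega
    · intro h; omega

lemma Acard_parity (S : Finset (Fin n)) (hS : S ⊆ Oset v) :
    (Aset v S).card + S.card
      = 2*((S.filter (fun j => v j = 3)).card)
        + ((Oset v).filter (fun j => v j = 1)).card := by
  have hmem : ∀ j ∈ S, v j = 1 ∨ v j = 3 := fun j hj => by
    have := hS hj; simpa [Oset] using this
  have hA : Aset v S = (S.filter (fun j => v j = 3))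
      ∪ ((Oset v \ S).filter (fun j => v j = 1)) := by
    ext j
    simp only [Aset, Finset.mem_filter, Finset.mem_union, Finset.mem_sdiff]
    constructor
    · rintro ⟨hO, h | h⟩
      · exact Or.inl ⟨h.1, h.2⟩
      · exact Or.inr ⟨⟨hO, h.1⟩, h.2⟩
    · rintro (⟨hs, h3⟩ | ⟨⟨hO, hns⟩, h1⟩)
      · exact ⟨hS hs, Or.inl ⟨hs, h3⟩⟩
      · exact ⟨hO, Or.inr ⟨hns, h1⟩⟩
  have hdisj : Disjoint (S.filter (fun j => v j = 3))
      ((Oset v \ S).filter (fun j => v j = 1)) := by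
    rw [Finset.disjoint_left]
    intro j hj hj'
    exact (Finset.mem_sdiff.mp (Finset.mem_filter.mp hj').1).2 (Finset.mem_filter.mp hj).1
  have hO1 : ((Oset v \ S).filter (fun j => v j = 1)).card
      + (S.filter (fun j => v j = 1)).card
      = ((Oset v).filter (fun j => v j = 1)).card := by
    have : (Oset v).filter (fun j => v j = 1)
        = ((Oset v \ S).filter (fun j => v j = 1)) ∪ (S.filter (fun j => v j = 1)) := by
      ext j
      simp only [Finset.mem_filter, Finset.mem_union, Finset.mem_sdiff]
      constructor
      · rintro ⟨hO, h1⟩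
        by_cases hs : j ∈ S
        · exact Or.inr ⟨hs, h1⟩
        · exact Or.inl ⟨⟨hO, hs⟩, h1⟩
      · rintro (⟨⟨hO, _⟩, h1⟩ | ⟨hs, h1⟩)
        · exact ⟨hO, h1⟩
        · exact ⟨hS hs, h1⟩
    rw [this, Finset.card_union_of_disjoint (by
      rw [Finset.disjoint_left]
      intro j hj hj'
      exact (Finset.mem_sdiff.mp (Finset.mem_filter.mp hj).1).2 (Finset.mem_filter.mp hj').1)]
  have hScard : (S.filter (fun j => v j = 1)).card + (S.filter (fun j => v j = 3)).card
      = S.card := by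
    have heq : S.filter (fun j => v j = 3) = S.filter (fun j => ¬ v j = 1) := by
      ext j
      simp only [Finset.mem_filter, and_congr_right_iff]
      intro hj
      rcases hmem j hj with h | h <;> simp [h]
    rw [heq, Finset.card_filter_add_card_filter_not]
  rw [hA, Finset.card_union_of_disjoint hdisj]
  omega

lemma good_card_even (x4 : ℕ) (hNe : (Oset v).card % 2 = 0) :
    (good v x4).card = 2^(Oset v).card := by
  unfold good
  rw [Finset.filter_true_of_mem, Finset.card_powerset]
  intro S hS
  have hab := Acard_rel v S
  unfold kInt
  omega

lemma good_card_odd (x4 : ℕ) (hNo : (Oset v).card % 2 = 1) :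
    (good v x4).card = 2^((Oset v).card - 1) := by
  have hO : (Oset v).Nonempty := by
    rw [← Finset.card_pos]; omega
  unfold good
  rw [Finset.filter_congr (q := fun S =>
      S.card % 2 = (((Oset v).filter (fun j => v j = 1)).card + x4 + ((Oset v).card + 1)/2) % 2)
    (fun S hS => ?_)]
  · exact count_parity (Oset v) hO _
  · have hpar := Acard_parity v S (Finset.mem_powerset.mp hS)
    unfold kInt
    constructor
    · intro h; omega
    · intro h; omega
end Thm1c
namespace Thm1c
open Complex
variable {n : ℕ} (u v : Fin n → Fin 4)

lemma Ocard_lam : (Oset v).card = lam2 u v + lam4 u v + lam5 u v + lam6 u v := by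
  unfold Oset lam2 lam4 lam5 lam6 freq
  simp only [Finset.card_filter, ← Finset.sum_add_distrib]
  refine Finset.sum_congr rfl fun j _ => ?_
  have : ∀ p q : Fin 4, (if (q = 1 ∨ q = 3) then (1:ℕ) else 0)
      = (if (p = 0 ∧ q = 1) then 1 else 0) + (if (p = 0 ∧ q = 3) then 1 else 0)
        + ((if (p = 2 ∧ q = 1) then 1 else 0) + (if (p = 2 ∧ q = 3) then 1 else 0))
        + ((if (p = 1 ∧ q = 1) then 1 else 0) + (if (p = 3 ∧ q = 3) then 1 else 0))
        + ((if (p = 1 ∧ q = 3) then 1 else 0) + (if (p = 3 ∧ q = 1) then 1 else 0)) := by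
    decide
  exact this (u j) (v j)

lemma Tcard_lam : (Tset v).card = lam3 u v + lam7 u v + lam9 u v := by
  unfold Tset lam3 lam7 lam9 freq
  simp only [Finset.card_filter, ← Finset.sum_add_distrib]
  refine Finset.sum_congr rfl fun j _ => ?_
  have : ∀ p q : Fin 4, (if q = 2 then (1:ℕ) else 0)
      = (if (p = 1 ∧ q = 2) then 1 else 0) + (if (p = 3 ∧ q = 2) then 1 else 0)
        + (if (p = 0 ∧ q = 2) then 1 else 0) + (if (p = 2 ∧ q = 2) then 1 else 0) := by
    decide
  exact this (u j) (v j)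

lemma rho_head (z t N nn M : ℕ) (hn : z + t + N = nn) (hM : N = 2*M ∨ N = 2*M+1) :
    (2:ℝ) ^ (((2*t + N + 1:ℕ):ℝ)/2 - 2*(nn:ℝ))
        * ((4:ℝ)^z * 2^t * 2^N * (if N = 2*M then s2/2 else 1))
      = ((2:ℝ)^M)⁻¹ := by
  have e4 : (4:ℝ)^z = (2:ℝ)^((2*z:ℕ):ℝ) := by
    rw [Real.rpow_natCast, show (4:ℝ) = 2^2 by norm_num, ← pow_mul]
  have e2 : ∀ k : ℕ, (2:ℝ)^(k:ℕ) = (2:ℝ)^((k:ℕ):ℝ) := fun k => (Real.rpow_natCast 2 k).symm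
  have es : s2/2 = (2:ℝ)^(-(1/2:ℝ)) := by
    rw [show (-(1/2:ℝ)) = 1/2 - 1 by norm_num, Real.rpow_sub (by norm_num), Real.rpow_one,
      ← Real.sqrt_eq_rpow]
  have einv : ((2:ℝ)^M)⁻¹ = (2:ℝ)^(-((M:ℕ):ℝ)) := by
    rw [Real.rpow_neg (by norm_num), Real.rpow_natCast]
  rcases hM with hM | hM
  · rw [if_pos hM, e4, e2 t, e2 N, es, einv]
    rw [← Real.rpow_add (by norm_num : (0:ℝ) < 2), ← Real.rpow_add (by norm_num : (0:ℝ) < 2),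
      ← Real.rpow_add (by norm_num : (0:ℝ) < 2), ← Real.rpow_add (by norm_num : (0:ℝ) < 2)]
    congr 1
    subst hM; subst hn
    push_cast
    ring
  · rw [if_neg (by omega), mul_one, e4, e2 t, e2 N, einv]
    rw [← Real.rpow_add (by norm_num : (0:ℝ) < 2), ← Real.rpow_add (by norm_num : (0:ℝ) < 2),
      ← Real.rpow_add (by norm_num : (0:ℝ) < 2)]
    congr 1
    subst hM; subst hn
    push_cast
    ring
end Thm1c
namespace Thm1c
open Complex
variable {n : ℕ} (u v : Fin n → Fin 4)

lemma master (hn : 1 ≤ n) (x3 x4 : ℕ) (hx : (x3,x4) = (0,1) ∨ (x3,x4) = (1,0)) :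
    ((wordSet u v 0 0 x3 x4).ncard : ℝ) = ((rho2 u v)⁻¹) ^ 2 ∧
    ∀ S1 S2 S3 : Finset (Fin n), IsWord u v S1 S2 S3 0 0 x3 x4 →
      |Vval u v S1 S2 S3 0 0 x3 x4| = rho2 u v ∧
      wordLength S1 S2 S3 0 0 x3 x4 = len2 u v + 1 := by
  have hL : lam2 u v + lam4 u v + lam5 u v + lam6 u v = (Oset v).card := (Ocard_lam u v).symm
  have hT : (Tset v).card = lam3 u v + lam7 u v + lam9 u v := Tcard_lam u v
  have hpart : (Zset v).card + (Tset v).card + (Oset v).card = n := card_partition v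
  have hrho : rho2 u v = ((2:ℝ)^((Oset v).card/2))⁻¹ := by unfold rho2; rw [hL]
  have hx34 : x3 + x4 = 1 := by rcases hx with h | h <;>
    obtain ⟨e1, e2⟩ := Prod.mk.injEq .. |>.mp h <;> omega
  constructor
  · have hinj : Function.Injective (fun S : Finset (Fin n) => (Tset v, S, Oset v \ S)) := by
      intro a b h
      simpa using congrArg (fun p => p.2.1) h
    have hcount : (wordSet u v 0 0 x3 x4).ncard = (good v x4).card := by
      rw [wordSet_eq u v x3 x4 hx, Set.ncard_coe_finset, Finset.card_image_of_injective _ hinj]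
    have hgood : (good v x4).card = 2^(2*((Oset v).card/2)) := by
      rcases Nat.even_or_odd (Oset v).card with hN | hN
      · rw [good_card_even v x4 (Nat.even_iff.mp hN)]; congr 1
        have := Nat.even_iff.mp hN; omega
      · rw [good_card_odd v x4 (Nat.odd_iff.mp hN)]; congr 1
        have := Nat.odd_iff.mp hN; omega
    rw [hcount, hgood, hrho, inv_inv]
    push_cast
    rw [← pow_mul, Nat.mul_comm]
  · intro S1 S2 S3 hW
    obtain ⟨hS, hk⟩ := (isWord_iff u v S1 S2 S3 x3 x4 hx).mp hW
    obtain ⟨hs1, hs2, hs3⟩ := hS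
    have hc1 : S1.card = (Tset v).card := by rw [hs1]
    have hc23 : S2.card + S3.card = (Oset v).card := by
      rw [hs3, Finset.card_sdiff_of_subset hs2]
      have := Finset.card_le_card hs2; omega
    constructor
    · have habs := Vval_abs u v S1 S2 S3 ⟨hs1, hs2, hs3⟩ x3 x4 hx
      have hAle := Acard_rel v S2
      rcases Nat.even_or_odd (Oset v).card with hN | hN
      · have hNe := Nat.even_iff.mp hN
        have hkodd : kInt v S2 x4 % 2 = 1 := by unfold kInt; omega
        have hcos := (cosk (kInt v S2 x4)).1 hkodd
        have hrh := rho_head (Zset v).card (Tset v).card (Oset v).card n ((Oset v).card/2)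
          hpart (Or.inl (by omega))
        rw [if_pos (by omega : (Oset v).card = 2*((Oset v).card/2))] at hrh
        rw [habs, hcos, hrho]
        rw [show Cc n S1 S2 S3 1
            = (2:ℝ) ^ (((2*(Tset v).card + (Oset v).card + 1:ℕ):ℝ)/2 - 2*(n:ℝ)) from by
          unfold Cc; rw [show (2*S1.card + S2.card + S3.card + 1 : ℕ)
            = 2*(Tset v).card + (Oset v).card + 1 from by omega]]
        exact hrh
      · have hNo := Nat.odd_iff.mp hN
        have hx4 : x4 = 0 ∨ x4 = 1 := by omega
        have hk0 : kInt v S2 x4 % 4 = 0 := by unfold kInt at hk ⊢; omega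
        have hcos := (cosk (kInt v S2 x4)).2.1 hk0
        have hcos' : Real.cos (((kInt v S2 x4 : ℤ):ℝ) * (π/4)) = 1 ∨
            Real.cos (((kInt v S2 x4 : ℤ):ℝ) * (π/4)) = -1 := abs_eq (by norm_num) |>.mp hcos
        have hrh := rho_head (Zset v).card (Tset v).card (Oset v).card n ((Oset v).card/2)
          hpart (Or.inr (by omega))
        rw [if_neg (by omega : ¬ (Oset v).card = 2*((Oset v).card/2)), mul_one] at hrh
        rw [habs, hcos, hrho]
        rw [show Cc n S1 S2 S3 1
            = (2:ℝ) ^ (((2*(Tset v).card + (Oset v).card + 1:ℕ):ℝ)/2 - 2*(n:ℝ)) from by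
          unfold Cc; rw [show (2*S1.card + S2.card + S3.card + 1 : ℕ)
            = 2*(Tset v).card + (Oset v).card + 1 from by omega]]
        rw [mul_one]
        exact hrh
    · unfold wordLength len2
      omega
end Thm1c

/-- Theorem 1(c): for x = 0001 and x = 0010 there are ρ₂⁻² words of type x; every
such word has aliasing index ρ₂ and length l₂ + 1. -/
theorem theorem1_c (n : ℕ) (hn : 1 ≤ n) (u v : Fin n → Fin 4)
    (x1 x2 x3 x4 : ℕ)
    (hx : (x1, x2, x3, x4) = (0, 0, 0, 1) ∨ (x1, x2, x3, x4) = (0, 0, 1, 0)) :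
    ((wordSet u v x1 x2 x3 x4).ncard : ℝ) = ((rho2 u v)⁻¹) ^ 2 ∧
    ∀ S1 S2 S3 : Finset (Fin n), IsWord u v S1 S2 S3 x1 x2 x3 x4 →
      |Vval u v S1 S2 S3 x1 x2 x3 x4| = rho2 u v ∧
      wordLength S1 S2 S3 x1 x2 x3 x4 = len2 u v + 1 := by
  rcases hx with h | h <;>
  · obtain ⟨e1, h⟩ := Prod.mk.injEq .. |>.mp h
    obtain ⟨e2, h⟩ := Prod.mk.injEq .. |>.mp h
    obtain ⟨e3, e4⟩ := Prod.mk.injEq .. |>.mp h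
    subst e1; subst e2; subst e3; subst e4
    first
      | exact Thm1c.master u v hn 0 1 (Or.inl rfl)
      | exact Thm1c.master u v hn 1 0 (Or.inr rfl)
end
end

section
/- (Theorem 1(f),(g),(h)) (f) For x = 1100 there is exactly one triple (S_1,S_2,S_3) of pairwise disjoint subsets of {1,…,n} that is a word of type x; it has aliasing index |V(x)| = 1 and length m + X = l_5 + 2. (g) For x = 0011 there is exactly one word of type x; it has aliasing index 1 and length l_6 + 2. (h) For x = 1111 there is exactly one word of type x; it has aliasing index 1 and length l_7 + 4. -/
open Real Finset

noncomputable section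

namespace Thm1Aux

lemma sqrt2_sq : Real.sqrt 2 * Real.sqrt 2 = 2 := Real.mul_self_sqrt (by norm_num)

lemma s0 : Real.sin (trigArg 0) = Real.sqrt 2 / 2 := by
  unfold trigArg; norm_num [Real.sin_pi_div_four]

lemma c0 : Real.cos (trigArg 0) = Real.sqrt 2 / 2 := by
  unfold trigArg; norm_num [Real.cos_pi_div_four]

lemma s1 : Real.sin (trigArg 1) = Real.sqrt 2 / 2 := by
  unfold trigArg
  rw [show Real.pi / 4 + Real.pi / 2 * 1 = Real.pi / 4 + Real.pi / 2 by ring,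
    Real.sin_add_pi_div_two, Real.cos_pi_div_four]

lemma c1 : Real.cos (trigArg 1) = -(Real.sqrt 2 / 2) := by
  unfold trigArg
  rw [show Real.pi / 4 + Real.pi / 2 * 1 = Real.pi / 4 + Real.pi / 2 by ring,
    Real.cos_add_pi_div_two, Real.sin_pi_div_four]

lemma s2 : Real.sin (trigArg 2) = -(Real.sqrt 2 / 2) := by
  unfold trigArg
  rw [show Real.pi / 4 + Real.pi / 2 * 2 = Real.pi / 4 + Real.pi by ring,
    Real.sin_add_pi, Real.sin_pi_div_four]

lemma c2 : Real.cos (trigArg 2) = -(Real.sqrt 2 / 2) := by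
  unfold trigArg
  rw [show Real.pi / 4 + Real.pi / 2 * 2 = Real.pi / 4 + Real.pi by ring,
    Real.cos_add_pi, Real.cos_pi_div_four]

lemma s3 : Real.sin (trigArg 3) = -(Real.sqrt 2 / 2) := by
  unfold trigArg
  rw [show Real.pi / 4 + Real.pi / 2 * 3 = (Real.pi / 4 + Real.pi) + Real.pi / 2 by ring,
    Real.sin_add_pi_div_two, Real.cos_add_pi, Real.cos_pi_div_four]

lemma c3 : Real.cos (trigArg 3) = Real.sqrt 2 / 2 := by
  unfold trigArg
  rw [show Real.pi / 4 + Real.pi / 2 * 3 = (Real.pi / 4 + Real.pi) + Real.pi / 2 by ring,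
    Real.cos_add_pi_div_two, Real.sin_add_pi, Real.sin_pi_div_four]
  ring

lemma sincos_nat (N : ℕ) :
    Real.sin (trigArg N) * Real.cos (trigArg N) = (-1 : ℝ) ^ N / 2 := by
  have h2 : Real.sin (2 * trigArg N) = (-1 : ℝ) ^ N := by
    rw [show 2 * trigArg (N : ℝ) = Real.pi / 2 + N * Real.pi by unfold trigArg; ring,
      Real.sin_add_nat_mul_pi, Real.sin_pi_div_two, mul_one]
  have h3 := Real.sin_two_mul (trigArg (N : ℝ))
  linarith [h3 ▸ h2]

lemma prodpow {n : ℕ} (a w : Fin n → Fin 4) :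
    Real.sin (trigArg (dotR a w)) * Real.cos (trigArg (dotR a w)) =
      (∏ j, ((-1 : ℝ) ^ ((w j : ℕ))) ^ ((a j : ℕ))) / 2 := by
  have hd : dotR a w = ((∑ j, (a j : ℕ) * (w j : ℕ) : ℕ) : ℝ) := by
    unfold dotR; push_cast; ring
  rw [hd, sincos_nat]
  congr 1
  rw [← Finset.prod_pow_eq_pow_sum]
  exact Finset.prod_congr rfl fun j _ => by rw [← pow_mul, mul_comm]

lemma neg_one_pow_ite (m : ℕ) :
    (-1 : ℝ) ^ m = if m % 2 = 1 then (-1 : ℝ) else 1 := by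
  rcases Nat.even_or_odd m with h | h
  · have h2 := Nat.even_iff.mp h
    rw [h.neg_one_pow, if_neg (by omega)]
  · rw [h.neg_one_pow, if_pos (Nat.odd_iff.mp h)]

def gfun {n : ℕ} (S1 S2 S3 : Finset (Fin n)) (j : Fin n) (t : Fin 4) : ℝ :=
  (if j ∈ S1 then Real.sin (trigArg ((t : ℕ) : ℝ)) * Real.cos (trigArg ((t : ℕ) : ℝ)) else 1) *
  (if j ∈ S2 then Real.cos (trigArg ((t : ℕ) : ℝ)) else 1) *
  (if j ∈ S3 then Real.sin (trigArg ((t : ℕ) : ℝ)) else 1)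

def valfun {n : ℕ} (S1 S2 S3 : Finset (Fin n)) (p : Fin n → Prop) [DecidablePred p]
    (j : Fin n) : ℝ :=
  if j ∈ S1 then (if p j then 2 else 0)
  else if j ∈ S2 then 0 else if j ∈ S3 then 0
  else if p j then 0 else 4

lemma fv0 : ((0 : Fin 4) : ℕ) = 0 := rfl
lemma fv1 : ((1 : Fin 4) : ℕ) = 1 := rfl
lemma fv2 : ((2 : Fin 4) : ℕ) = 2 := rfl
lemma fv3 : ((3 : Fin 4) : ℕ) = 3 := rfl

lemma psi_eq_prod {n : ℕ} (S1 S2 S3 : Finset (Fin n)) (a : Fin n → Fin 4) :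
    psi S1 S2 S3 a = ∏ j, gfun S1 S2 S3 j (a j) := by
  have hext : ∀ (S : Finset (Fin n)) (f : Fin n → ℝ),
      ∏ j ∈ S, f j = ∏ j, (if j ∈ S then f j else 1) := by
    intro S f
    rw [Finset.prod_ite_mem, Finset.univ_inter]
  unfold psi gfun
  rw [hext S1, hext S2, hext S3, ← Finset.prod_mul_distrib, ← Finset.prod_mul_distrib]

lemma sum_gfun {n : ℕ} (S1 S2 S3 : Finset (Fin n)) (hd : PairwiseDisj S1 S2 S3)
    (p : Fin n → Prop) [DecidablePred p] (e : Fin n → ℝ)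
    (he : ∀ j, e j = if p j then -1 else 1) (j : Fin n) :
    ∑ t : Fin 4, e j ^ ((t : ℕ)) * gfun S1 S2 S3 j t = valfun S1 S2 S3 p j := by
  obtain ⟨d12, d13, d23⟩ := hd
  have hsq := sqrt2_sq
  have hsq2 : Real.sqrt 2 ^ 2 = 2 := Real.sq_sqrt (by norm_num)
  have h2' : j ∈ S1 → j ∉ S2 := fun h => Finset.disjoint_left.mp d12 h
  have h3' : j ∈ S1 → j ∉ S3 := fun h => Finset.disjoint_left.mp d13 h
  have h3'' : j ∈ S2 → j ∉ S3 := fun h => Finset.disjoint_left.mp d23 h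
  by_cases h1 : j ∈ S1 <;> by_cases h2 : j ∈ S2 <;> by_cases h3 : j ∈ S3 <;>
    first
    | (exact absurd h2 (h2' h1))
    | (exact absurd h3 (h3' h1))
    | (exact absurd h3 (h3'' h2))
    | (simp only [gfun, valfun, h1, h2, h3, if_true, if_false, one_mul, mul_one, he j,
        Fin.sum_univ_four, fv0, fv1, fv2, fv3]
       by_cases hp : p j <;>
         simp only [hp, if_true, if_false, ite_true, ite_false] <;>
         norm_num [s0, c0, s1, c1, s2, c2, s3, c3] <;>
         first
         | ring1
         | linear_combination hsq
         | linear_combination -hsq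
         | linear_combination 2 * hsq
         | linear_combination -(2 : ℝ) * hsq
         | linear_combination hsq2
         | linear_combination -hsq2
         | linear_combination 2 * hsq2
         | linear_combination -(2 : ℝ) * hsq2
         | nlinarith [hsq, hsq2]
       )

lemma key {n : ℕ} (S1 S2 S3 : Finset (Fin n)) (hd : PairwiseDisj S1 S2 S3)
    (p : Fin n → Prop) [DecidablePred p] (e : Fin n → ℝ)
    (he : ∀ j, e j = if p j then -1 else 1) :
    ∑ a : Fin n → Fin 4, (∏ j, e j ^ ((a j : ℕ))) * psi S1 S2 S3 a
      = ∏ j, valfun S1 S2 S3 p j := by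
  have step : ∀ a : Fin n → Fin 4,
      (∏ j, e j ^ ((a j : ℕ))) * psi S1 S2 S3 a
        = ∏ j, (e j ^ (((a j) : ℕ)) * gfun S1 S2 S3 j (a j)) := by
    intro a
    rw [psi_eq_prod, ← Finset.prod_mul_distrib]
  rw [Finset.sum_congr rfl fun a _ => step a]
  have h := Finset.sum_prod_piFinset (Finset.univ : Finset (Fin 4))
    (fun (j : Fin n) (t : Fin 4) => e j ^ ((t : ℕ)) * gfun S1 S2 S3 j t)
  rw [Fintype.piFinset_univ] at h
  exact h.trans (Finset.prod_congr rfl fun j _ => sum_gfun S1 S2 S3 hd p e he j)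


lemma numeric (kk mm k0 nn : ℕ) (hkm : kk + mm = nn) :
    (2 : ℝ) ^ ((2 * (kk : ℝ) + 2 * (k0 : ℝ)) / 2 - 2 * (nn : ℝ)) * (1 / 2 : ℝ) ^ k0 *
      ((2 : ℝ) ^ kk * (4 : ℝ) ^ mm) = 1 := by
  have e4 : (4 : ℝ) ^ mm = (2 : ℝ) ^ (((2 * mm : ℕ) : ℝ)) := by
    rw [Real.rpow_natCast, show (4 : ℝ) = 2 ^ 2 by norm_num, ← pow_mul]
  have eh : (1 / 2 : ℝ) ^ k0 = (2 : ℝ) ^ (-(k0 : ℝ)) := by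
    rw [Real.rpow_neg (by norm_num), Real.rpow_natCast, one_div, inv_pow]
  have ek : (2 : ℝ) ^ kk = (2 : ℝ) ^ ((kk : ℝ)) := by rw [Real.rpow_natCast]
  rw [e4, eh, ek, ← Real.rpow_add (by norm_num : (0:ℝ) < 2),
    ← Real.rpow_add (by norm_num : (0:ℝ) < 2), ← Real.rpow_add (by norm_num : (0:ℝ) < 2)]
  have hc : (kk : ℝ) + (mm : ℝ) = (nn : ℝ) := by exact_mod_cast hkm
  convert Real.rpow_zero (2 : ℝ) using 2
  push_cast
  linarith

lemma part {n : ℕ} (u v : Fin n → Fin 4) (x1 x2 x3 x4 k0 : ℕ)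
    (hX : x1 + x2 + x3 + x4 = 2 * k0)
    (p : Fin n → Prop) [DecidablePred p]
    (hV : ∀ S1 S2 S3 : Finset (Fin n), PairwiseDisj S1 S2 S3 →
      Vval u v S1 S2 S3 x1 x2 x3 x4 =
        (2 : ℝ) ^ ((((2 * S1.card + S2.card + S3.card + (x1 + x2 + x3 + x4) : ℕ)) : ℝ) / 2
            - 2 * (n : ℝ)) * (1 / 2 : ℝ) ^ k0 *
          ∏ j, valfun S1 S2 S3 p j) :
    (wordSet u v x1 x2 x3 x4).ncard = 1 ∧
      ∀ S1 S2 S3 : Finset (Fin n), IsWord u v S1 S2 S3 x1 x2 x3 x4 →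
        |Vval u v S1 S2 S3 x1 x2 x3 x4| = 1 ∧
          wordLength S1 S2 S3 x1 x2 x3 x4
            = 2 * (Finset.univ.filter p).card + 2 * k0 := by
  set O : Finset (Fin n) := Finset.univ.filter p with hO
  set k : ℕ := O.card with hk
  set m : ℕ := (Finset.univ.filter fun j => ¬ p j).card with hm
  have hkm : k + m = n := by
    rw [hk, hm, hO, Finset.card_filter_add_card_filter_not, Finset.card_univ,
      Fintype.card_fin]
  have hdO : PairwiseDisj O ∅ ∅ :=
    ⟨Finset.disjoint_empty_right _, Finset.disjoint_empty_right _,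
      Finset.disjoint_empty_right _⟩
  have Vword : Vval u v O ∅ ∅ x1 x2 x3 x4 = 1 := by
    rw [hV O ∅ ∅ hdO]
    have hval : ∀ j, valfun O ∅ ∅ p j = if p j then (2 : ℝ) else 4 := by
      intro j
      by_cases hp : p j <;> simp [valfun, hp, hO, Finset.mem_filter]
    rw [Finset.prod_congr rfl fun j _ => hval j, Finset.prod_ite (fun _ => (2 : ℝ))
      (fun _ => (4 : ℝ)), Finset.prod_const, Finset.prod_const]
    have hcast : (((2 * O.card + (∅ : Finset (Fin n)).card + (∅ : Finset (Fin n)).card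
        + (x1 + x2 + x3 + x4) : ℕ)) : ℝ) = 2 * (k : ℝ) + 2 * (k0 : ℝ) := by
      rw [hX]; push_cast [Finset.card_empty, ← hk]; ring
    rw [hcast]
    have hfilter1 : (Finset.univ.filter fun j => p j).card = k := by rw [hk, hO]
    have hfilter2 : (Finset.univ.filter fun j => ¬ p j).card = m := by rw [hm]
    rw [hfilter1, hfilter2]
    exact numeric k m k0 n hkm
  have char : ∀ S1 S2 S3 : Finset (Fin n), IsWord u v S1 S2 S3 x1 x2 x3 x4 ↔
      (S1 = O ∧ S2 = ∅ ∧ S3 = ∅) := by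
    intro S1 S2 S3
    constructor
    · rintro ⟨hd, hne⟩
      rw [hV S1 S2 S3 hd] at hne
      have hP : (∏ j, valfun S1 S2 S3 p j) ≠ 0 := by
        intro h0; rw [h0, mul_zero] at hne; exact hne rfl
      have hvals : ∀ j, valfun S1 S2 S3 p j ≠ 0 := fun j =>
        Finset.prod_ne_zero_iff.mp hP j (Finset.mem_univ j)
      have hS2 : S2 = ∅ := by
        rw [Finset.eq_empty_iff_forall_notMem]
        intro j hj
        have h1 : j ∉ S1 := Finset.disjoint_right.mp hd.1 hj
        exact hvals j (by simp [valfun, h1, hj])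
      have hS3 : S3 = ∅ := by
        rw [Finset.eq_empty_iff_forall_notMem]
        intro j hj
        have h1 : j ∉ S1 := Finset.disjoint_right.mp hd.2.1 hj
        have h2 : j ∉ S2 := Finset.disjoint_right.mp hd.2.2 hj
        exact hvals j (by simp [valfun, h1, h2, hj])
      subst hS2; subst hS3
      refine ⟨?_, rfl, rfl⟩
      ext j
      simp only [hO, Finset.mem_filter, Finset.mem_univ, true_and]
      constructor
      · intro hj
        by_contra hp
        exact hvals j (by simp [valfun, hj, hp])
      · intro hp
        by_contra hj
        exact hvals j (by simp [valfun, hj, hp])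
    · rintro ⟨rfl, rfl, rfl⟩
      exact ⟨hdO, by rw [Vword]; norm_num⟩
  constructor
  · have hset : wordSet u v x1 x2 x3 x4 = {(O, ∅, ∅)} := by
      ext t
      obtain ⟨S1, S2, S3⟩ := t
      constructor
      · intro h
        obtain ⟨e1, e2, e3⟩ := (char S1 S2 S3).mp h
        simp [Set.mem_singleton_iff, Prod.ext_iff, e1, e2, e3]
      · intro h
        rw [Set.mem_singleton_iff] at h
        simp only [Prod.mk.injEq] at h
        exact (char S1 S2 S3).mpr ⟨h.1, h.2.1, h.2.2⟩
    rw [hset, Set.ncard_singleton]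
  · intro S1 S2 S3 hw
    obtain ⟨e1, e2, e3⟩ := (char S1 S2 S3).mp hw
    subst e1; subst e2; subst e3
    refine ⟨by rw [Vword]; norm_num, ?_⟩
    simp only [wordLength, Finset.card_empty, hX]
    omega


lemma hV_f {n : ℕ} (u v : Fin n → Fin 4) (S1 S2 S3 : Finset (Fin n))
    (hd : PairwiseDisj S1 S2 S3) :
    Vval u v S1 S2 S3 1 1 0 0 =
      (2 : ℝ) ^ ((((2 * S1.card + S2.card + S3.card + (1 + 1 + 0 + 0) : ℕ)) : ℝ) / 2
          - 2 * (n : ℝ)) * (1 / 2 : ℝ) ^ 1 *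
        ∏ j, valfun S1 S2 S3 (fun j => (u j : ℕ) % 2 = 1) j := by
  set C : ℝ := (2 : ℝ) ^ ((((2 * S1.card + S2.card + S3.card + (1 + 1 + 0 + 0) : ℕ)) : ℝ) / 2
      - 2 * (n : ℝ)) with hC
  have he : ∀ j, ((-1 : ℝ) ^ ((u j : ℕ))) =
      if (u j : ℕ) % 2 = 1 then (-1 : ℝ) else 1 := fun j => neg_one_pow_ite _
  unfold Vval
  have hsum : ∀ a : Fin n → Fin 4, phi u v S1 S2 S3 1 1 0 0 a =
      C * (1 / 2 : ℝ) ^ 1 *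
        ((∏ j, ((-1 : ℝ) ^ ((u j : ℕ))) ^ ((a j : ℕ))) * psi S1 S2 S3 a) := by
    intro a
    have h := prodpow a u
    unfold phi
    rw [← hC]
    simp only [pow_one, pow_zero, mul_one]
    linear_combination (C * psi S1 S2 S3 a) * h
  rw [Finset.sum_congr rfl fun a _ => hsum a, ← Finset.mul_sum,
    key S1 S2 S3 hd (fun j => (u j : ℕ) % 2 = 1) _ he]

lemma hV_g {n : ℕ} (u v : Fin n → Fin 4) (S1 S2 S3 : Finset (Fin n))
    (hd : PairwiseDisj S1 S2 S3) :
    Vval u v S1 S2 S3 0 0 1 1 =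
      (2 : ℝ) ^ ((((2 * S1.card + S2.card + S3.card + (0 + 0 + 1 + 1) : ℕ)) : ℝ) / 2
          - 2 * (n : ℝ)) * (1 / 2 : ℝ) ^ 1 *
        ∏ j, valfun S1 S2 S3 (fun j => (v j : ℕ) % 2 = 1) j := by
  set C : ℝ := (2 : ℝ) ^ ((((2 * S1.card + S2.card + S3.card + (0 + 0 + 1 + 1) : ℕ)) : ℝ) / 2
      - 2 * (n : ℝ)) with hC
  have he : ∀ j, ((-1 : ℝ) ^ ((v j : ℕ))) =
      if (v j : ℕ) % 2 = 1 then (-1 : ℝ) else 1 := fun j => neg_one_pow_ite _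
  unfold Vval
  have hsum : ∀ a : Fin n → Fin 4, phi u v S1 S2 S3 0 0 1 1 a =
      C * (1 / 2 : ℝ) ^ 1 *
        ((∏ j, ((-1 : ℝ) ^ ((v j : ℕ))) ^ ((a j : ℕ))) * psi S1 S2 S3 a) := by
    intro a
    have h := prodpow a v
    unfold phi
    rw [← hC]
    simp only [pow_one, pow_zero, mul_one, one_mul]
    linear_combination (C * psi S1 S2 S3 a) * h
  rw [Finset.sum_congr rfl fun a _ => hsum a, ← Finset.mul_sum,
    key S1 S2 S3 hd (fun j => (v j : ℕ) % 2 = 1) _ he]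

lemma hV_h {n : ℕ} (u v : Fin n → Fin 4) (S1 S2 S3 : Finset (Fin n))
    (hd : PairwiseDisj S1 S2 S3) :
    Vval u v S1 S2 S3 1 1 1 1 =
      (2 : ℝ) ^ ((((2 * S1.card + S2.card + S3.card + (1 + 1 + 1 + 1) : ℕ)) : ℝ) / 2
          - 2 * (n : ℝ)) * (1 / 2 : ℝ) ^ 2 *
        ∏ j, valfun S1 S2 S3 (fun j => ((u j : ℕ) + (v j : ℕ)) % 2 = 1) j := by
  set C : ℝ := (2 : ℝ) ^ ((((2 * S1.card + S2.card + S3.card + (1 + 1 + 1 + 1) : ℕ)) : ℝ) / 2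
      - 2 * (n : ℝ)) with hC
  have he : ∀ j, ((-1 : ℝ) ^ ((u j : ℕ) + (v j : ℕ))) =
      if ((u j : ℕ) + (v j : ℕ)) % 2 = 1 then (-1 : ℝ) else 1 := fun j => neg_one_pow_ite _
  unfold Vval
  have hsum : ∀ a : Fin n → Fin 4, phi u v S1 S2 S3 1 1 1 1 a =
      C * (1 / 2 : ℝ) ^ 2 *
        ((∏ j, ((-1 : ℝ) ^ ((u j : ℕ) + (v j : ℕ))) ^ ((a j : ℕ))) * psi S1 S2 S3 a) := by
    intro a
    have h1 := prodpow a u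
    have h2 := prodpow a v
    have hP : (∏ j, ((-1 : ℝ) ^ ((u j : ℕ))) ^ ((a j : ℕ))) *
        (∏ j, ((-1 : ℝ) ^ ((v j : ℕ))) ^ ((a j : ℕ))) =
        ∏ j, ((-1 : ℝ) ^ ((u j : ℕ) + (v j : ℕ))) ^ ((a j : ℕ)) := by
      rw [← Finset.prod_mul_distrib]
      exact Finset.prod_congr rfl fun j _ => by rw [pow_add, mul_pow]
    unfold phi
    rw [← hC]
    simp only [pow_one]
    linear_combination (C * psi S1 S2 S3 a * Real.sin (trigArg (dotR a v)) *
        Real.cos (trigArg (dotR a v))) * h1 +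
      (C * psi S1 S2 S3 a * (∏ j, ((-1 : ℝ) ^ ((u j : ℕ))) ^ ((a j : ℕ))) / 2) * h2 +
      (C * psi S1 S2 S3 a / 4) * hP
  rw [Finset.sum_congr rfl fun a _ => hsum a, ← Finset.mul_sum,
    key S1 S2 S3 hd (fun j => ((u j : ℕ) + (v j : ℕ)) % 2 = 1) _ he]

lemma card5 {n : ℕ} (u v : Fin n → Fin 4) :
    (Finset.univ.filter fun j => (u j : ℕ) % 2 = 1).card =
      lam1 u v + lam3 u v + lam5 u v + lam6 u v := by
  unfold lam1 lam3 lam5 lam6 freq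
  simp only [Finset.card_filter]
  simp only [← Finset.sum_add_distrib]
  apply Finset.sum_congr rfl
  intro j _
  generalize u j = a
  generalize v j = b
  fin_cases a <;> fin_cases b <;> decide

lemma card6 {n : ℕ} (u v : Fin n → Fin 4) :
    (Finset.univ.filter fun j => (v j : ℕ) % 2 = 1).card =
      lam2 u v + lam4 u v + lam5 u v + lam6 u v := by
  unfold lam2 lam4 lam5 lam6 freq
  simp only [Finset.card_filter]
  simp only [← Finset.sum_add_distrib]
  apply Finset.sum_congr rfl
  intro j _
  generalize u j = a
  generalize v j = b
  fin_cases a <;> fin_cases b <;> decide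

lemma card7 {n : ℕ} (u v : Fin n → Fin 4) :
    (Finset.univ.filter fun j => ((u j : ℕ) + (v j : ℕ)) % 2 = 1).card =
      lam1 u v + lam2 u v + lam3 u v + lam4 u v := by
  unfold lam1 lam2 lam3 lam4 freq
  simp only [Finset.card_filter]
  simp only [← Finset.sum_add_distrib]
  apply Finset.sum_congr rfl
  intro j _
  generalize u j = a
  generalize v j = b
  fin_cases a <;> fin_cases b <;> decide


end Thm1Aux


/-- Theorem 1(f),(g),(h): for x = 1100, x = 0011 and x = 1111 there is exactly one
word of type x; it has aliasing index 1 and length l₅ + 2, l₆ + 2 and l₇ + 4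
respectively. -/
theorem theorem1_fgh (n : ℕ) (hn : 1 ≤ n) (u v : Fin n → Fin 4) :
    ((wordSet u v 1 1 0 0).ncard = 1 ∧
      ∀ S1 S2 S3 : Finset (Fin n), IsWord u v S1 S2 S3 1 1 0 0 →
        |Vval u v S1 S2 S3 1 1 0 0| = 1 ∧
        wordLength S1 S2 S3 1 1 0 0 = len5 u v + 2) ∧
    ((wordSet u v 0 0 1 1).ncard = 1 ∧
      ∀ S1 S2 S3 : Finset (Fin n), IsWord u v S1 S2 S3 0 0 1 1 →
        |Vval u v S1 S2 S3 0 0 1 1| = 1 ∧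
        wordLength S1 S2 S3 0 0 1 1 = len6 u v + 2) ∧
    ((wordSet u v 1 1 1 1).ncard = 1 ∧
      ∀ S1 S2 S3 : Finset (Fin n), IsWord u v S1 S2 S3 1 1 1 1 →
        |Vval u v S1 S2 S3 1 1 1 1| = 1 ∧
        wordLength S1 S2 S3 1 1 1 1 = len7 u v + 4) := by
  refine ⟨?_, ?_, ?_⟩
  · obtain ⟨h1, h2⟩ := Thm1Aux.part u v 1 1 0 0 1 (by norm_num)
      (fun j => (u j : ℕ) % 2 = 1) (fun S1 S2 S3 hd => Thm1Aux.hV_f u v S1 S2 S3 hd)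
    refine ⟨h1, fun S1 S2 S3 hw => ⟨(h2 S1 S2 S3 hw).1, ?_⟩⟩
    rw [(h2 S1 S2 S3 hw).2, Thm1Aux.card5 u v]
    unfold len5
    ring
  · obtain ⟨h1, h2⟩ := Thm1Aux.part u v 0 0 1 1 1 (by norm_num)
      (fun j => (v j : ℕ) % 2 = 1) (fun S1 S2 S3 hd => Thm1Aux.hV_g u v S1 S2 S3 hd)
    refine ⟨h1, fun S1 S2 S3 hw => ⟨(h2 S1 S2 S3 hw).1, ?_⟩⟩
    rw [(h2 S1 S2 S3 hw).2, Thm1Aux.card6 u v]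
    unfold len6
    ring
  · obtain ⟨h1, h2⟩ := Thm1Aux.part u v 1 1 1 1 2 (by norm_num)
      (fun j => ((u j : ℕ) + (v j : ℕ)) % 2 = 1)
      (fun S1 S2 S3 hd => Thm1Aux.hV_h u v S1 S2 S3 hd)
    refine ⟨h1, fun S1 S2 S3 hw => ⟨(h2 S1 S2 S3 hw).1, ?_⟩⟩
    rw [(h2 S1 S2 S3 hw).2, Thm1Aux.card7 u v]
    unfold len7
    ring
end
end

section
/- (Lemma A.1) For every a = (a_1,…,a_n) ∈ {0,1,2,3}^n, ψ(a) = (1/(2^m · i^{n_1+n_3})) · Σ_{W_1⊆S_1} Σ_{W_2⊆S_2} Σ_{W_3⊆S_3} M(w̄_1,w̄_2,w̄_3) · exp((iπ/2)(2Σ_{j∈W_1} a_j − 2Σ_{j∈W̄_1} a_j + Σ_{j∈W_2∪W_3} a_j − Σ_{j∈W̄_2∪W̄_3} a_j)), where the equality is between complex numbers (the real number ψ(a) being viewed as a complex number). -/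
open Real Finset

noncomputable section

/-- M(w̄₁, w̄₂, w̄₃) = (−1)^{w̄₁+w̄₃} exp((iπ/4)(m − 4w̄₁ − 2w̄₂ − 2w̄₃)). -/
def Mfun (m w1 w2 w3 : ℕ) : ℂ :=
  (-1 : ℂ) ^ (w1 + w3) *
    Complex.exp (Complex.I * ((Real.pi : ℂ) / 4) *
      (((m : ℝ) - 4 * (w1 : ℝ) - 2 * (w2 : ℝ) - 2 * (w3 : ℝ) : ℝ) : ℂ))

lemma sinC (θ : ℝ) : ((Real.sin θ : ℝ) : ℂ) =
    (Complex.exp ((θ : ℂ) * Complex.I) + (-1) * Complex.exp (((-θ : ℝ) : ℂ) * Complex.I)) / (2 * Complex.I) := by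
  rw [Complex.ofReal_sin]
  have h := Complex.two_sin (θ : ℂ)
  have hI : (Complex.I : ℂ) ^ 2 = -1 := Complex.I_sq
  push_cast
  field_simp
  simp only [neg_mul] at h ⊢
  linear_combination Complex.I * h + (Complex.exp (-((θ:ℂ) * Complex.I)) - Complex.exp ((θ:ℂ) * Complex.I)) * hI

lemma cosC (θ : ℝ) : ((Real.cos θ : ℝ) : ℂ) =
    (Complex.exp ((θ : ℂ) * Complex.I) + (1 : ℂ) * Complex.exp (((-θ : ℝ) : ℂ) * Complex.I)) / 2 := by
  rw [Complex.ofReal_cos]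
  have h := Complex.two_cos (θ : ℂ)
  push_cast
  linear_combination h / 2

lemma sincosC (θ : ℝ) : ((Real.sin θ * Real.cos θ : ℝ) : ℂ) =
    (Complex.exp (((2 * θ : ℝ) : ℂ) * Complex.I) + (-1) * Complex.exp (((-(2 * θ) : ℝ) : ℂ) * Complex.I)) / (4 * Complex.I) := by
  have h : Real.sin θ * Real.cos θ = Real.sin (2 * θ) / 2 := by rw [Real.sin_two_mul]; ring
  rw [h]
  push_cast [sinC (2 * θ)]
  ring

lemma exp_expand {ι : Type*} [DecidableEq ι] (S : Finset ι) (θ : ι → ℝ) (ε : ℂ) :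
    ∏ j ∈ S, (Complex.exp ((θ j : ℂ) * Complex.I) + ε * Complex.exp (((-θ j : ℝ) : ℂ) * Complex.I)) =
    ∑ W ∈ S.powerset, ε ^ (S \ W).card *
      Complex.exp (((∑ j ∈ W, θ j - ∑ j ∈ S \ W, θ j : ℝ) : ℂ) * Complex.I) := by
  rw [Finset.prod_add]
  refine Finset.sum_congr rfl fun W hW => ?_
  rw [Finset.prod_mul_distrib, Finset.prod_const, mul_left_comm]
  congr 1
  rw [← Complex.exp_sum, ← Complex.exp_sum, ← Complex.exp_add]
  congr 1
  push_cast
  rw [sub_mul, Finset.sum_mul, Finset.sum_mul]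
  simp [neg_mul, sub_eq_add_neg]

lemma sum_trigArg {n : ℕ} (a : Fin n → Fin 4) (W : Finset (Fin n)) :
    ∑ j ∈ W, trigArg ((a j : ℕ) : ℝ) =
      (W.card : ℝ) * (Real.pi / 4) + Real.pi / 2 * ∑ j ∈ W, ((a j : ℕ) : ℝ) := by
  simp only [trigArg, Finset.sum_add_distrib, Finset.sum_const, nsmul_eq_mul, Finset.mul_sum]

/-- Lemma A.1: the expansion of ψ(a) as a triple sum over subsets W₁ ⊆ S₁,
W₂ ⊆ S₂, W₃ ⊆ S₃, with m = 2n₁ + n₂ + n₃. -/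
theorem lemmaA1 (n : ℕ) (hn : 1 ≤ n) (S1 S2 S3 : Finset (Fin n))
    (hd : PairwiseDisj S1 S2 S3) (a : Fin n → Fin 4) :
    ((psi S1 S2 S3 a : ℝ) : ℂ) =
      (1 / ((2 : ℂ) ^ (2 * S1.card + S2.card + S3.card) *
          Complex.I ^ (S1.card + S3.card))) *
        ∑ W1 ∈ S1.powerset, ∑ W2 ∈ S2.powerset, ∑ W3 ∈ S3.powerset,
          Mfun (2 * S1.card + S2.card + S3.card)
              (S1 \ W1).card (S2 \ W2).card (S3 \ W3).card *
            Complex.exp (Complex.I * ((Real.pi : ℂ) / 2) *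
              (((2 * ∑ j ∈ W1, ((a j : ℕ) : ℝ) - 2 * ∑ j ∈ S1 \ W1, ((a j : ℕ) : ℝ) +
                  ∑ j ∈ W2 ∪ W3, ((a j : ℕ) : ℝ) -
                  ∑ j ∈ (S2 \ W2) ∪ (S3 \ W3), ((a j : ℕ) : ℝ) : ℝ)) : ℂ)) := by
  obtain ⟨h12, h13, h23⟩ := hd
  have h1 : ((∏ j ∈ S1, (Real.sin (trigArg ((a j : ℕ) : ℝ)) * Real.cos (trigArg ((a j : ℕ) : ℝ))) : ℝ) : ℂ)
      = (∑ W ∈ S1.powerset, (-1 : ℂ) ^ (S1 \ W).card *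
          Complex.exp (((∑ j ∈ W, 2 * trigArg ((a j : ℕ) : ℝ) -
            ∑ j ∈ S1 \ W, 2 * trigArg ((a j : ℕ) : ℝ) : ℝ) : ℂ) * Complex.I)) / (4 * Complex.I) ^ S1.card := by
    rw [Complex.ofReal_prod]
    rw [Finset.prod_congr rfl fun j _ => sincosC (trigArg ((a j : ℕ) : ℝ))]
    rw [Finset.prod_div_distrib, Finset.prod_const]
    rw [exp_expand S1 (fun j => 2 * trigArg ((a j : ℕ) : ℝ)) (-1)]
  have h2 : ((∏ j ∈ S2, Real.cos (trigArg ((a j : ℕ) : ℝ)) : ℝ) : ℂ)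
      = (∑ W ∈ S2.powerset, (1 : ℂ) ^ (S2 \ W).card *
          Complex.exp (((∑ j ∈ W, trigArg ((a j : ℕ) : ℝ) -
            ∑ j ∈ S2 \ W, trigArg ((a j : ℕ) : ℝ) : ℝ) : ℂ) * Complex.I)) / (2 : ℂ) ^ S2.card := by
    rw [Complex.ofReal_prod]
    rw [Finset.prod_congr rfl fun j _ => cosC (trigArg ((a j : ℕ) : ℝ))]
    rw [Finset.prod_div_distrib, Finset.prod_const]
    rw [exp_expand S2 (fun j => trigArg ((a j : ℕ) : ℝ)) 1]
  have h3 : ((∏ j ∈ S3, Real.sin (trigArg ((a j : ℕ) : ℝ)) : ℝ) : ℂ)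
      = (∑ W ∈ S3.powerset, (-1 : ℂ) ^ (S3 \ W).card *
          Complex.exp (((∑ j ∈ W, trigArg ((a j : ℕ) : ℝ) -
            ∑ j ∈ S3 \ W, trigArg ((a j : ℕ) : ℝ) : ℝ) : ℂ) * Complex.I)) / (2 * Complex.I) ^ S3.card := by
    rw [Complex.ofReal_prod]
    rw [Finset.prod_congr rfl fun j _ => sinC (trigArg ((a j : ℕ) : ℝ))]
    rw [Finset.prod_div_distrib, Finset.prod_const]
    rw [exp_expand S3 (fun j => trigArg ((a j : ℕ) : ℝ)) (-1)]
  -- denominator identity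
  have hden : ((4 : ℂ) * Complex.I) ^ S1.card * (2 : ℂ) ^ S2.card * ((2 : ℂ) * Complex.I) ^ S3.card
      = (2 : ℂ) ^ (2 * S1.card + S2.card + S3.card) * Complex.I ^ (S1.card + S3.card) := by
    have h4 : ((4 : ℂ)) = 2 ^ 2 := by norm_num
    rw [mul_pow, mul_pow, pow_add, pow_add, pow_mul, h4]
    ring
  simp only [psi, Complex.ofReal_mul]
  rw [h1, h2, h3]
  rw [div_mul_div_comm, div_mul_div_comm, hden]
  rw [mul_assoc, Finset.sum_mul_sum, Finset.sum_mul_sum]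
  conv_lhs => simp only [Finset.mul_sum]
  rw [div_eq_mul_inv, mul_comm, ← one_div]
  congr 1
  refine Finset.sum_congr rfl fun W1 hW1 => Finset.sum_congr rfl fun W2 hW2 =>
    Finset.sum_congr rfl fun W3 hW3 => ?_
  rw [Finset.mem_powerset] at hW1 hW2 hW3
  -- notation
  have hc1 : (((S1 \ W1).card : ℝ)) = (S1.card : ℝ) - (W1.card : ℝ) := by
    rw [Finset.card_sdiff_of_subset hW1]; exact_mod_cast Nat.cast_sub (Finset.card_le_card hW1)
  have hc2 : (((S2 \ W2).card : ℝ)) = (S2.card : ℝ) - (W2.card : ℝ) := by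
    rw [Finset.card_sdiff_of_subset hW2]; exact_mod_cast Nat.cast_sub (Finset.card_le_card hW2)
  have hc3 : (((S3 \ W3).card : ℝ)) = (S3.card : ℝ) - (W3.card : ℝ) := by
    rw [Finset.card_sdiff_of_subset hW3]; exact_mod_cast Nat.cast_sub (Finset.card_le_card hW3)
  have hu1 : ∑ j ∈ W2 ∪ W3, ((a j : ℕ) : ℝ) = ∑ j ∈ W2, ((a j : ℕ) : ℝ) + ∑ j ∈ W3, ((a j : ℕ) : ℝ) :=
    Finset.sum_union (h23.mono hW2 hW3)
  have hu2 : ∑ j ∈ (S2 \ W2) ∪ (S3 \ W3), ((a j : ℕ) : ℝ)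
      = ∑ j ∈ S2 \ W2, ((a j : ℕ) : ℝ) + ∑ j ∈ S3 \ W3, ((a j : ℕ) : ℝ) :=
    Finset.sum_union (h23.mono (Finset.sdiff_subset) (Finset.sdiff_subset))
  -- the argument identity in ℝ
  have harg : ((∑ j ∈ W1, 2 * trigArg ((a j : ℕ) : ℝ) - ∑ j ∈ S1 \ W1, 2 * trigArg ((a j : ℕ) : ℝ)) +
      (∑ j ∈ W2, trigArg ((a j : ℕ) : ℝ) - ∑ j ∈ S2 \ W2, trigArg ((a j : ℕ) : ℝ)) +
      (∑ j ∈ W3, trigArg ((a j : ℕ) : ℝ) - ∑ j ∈ S3 \ W3, trigArg ((a j : ℕ) : ℝ)) : ℝ)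
      = Real.pi / 4 * (((2 * S1.card + S2.card + S3.card : ℕ) : ℝ) - 4 * ((S1 \ W1).card : ℝ)
          - 2 * ((S2 \ W2).card : ℝ) - 2 * ((S3 \ W3).card : ℝ)) +
        Real.pi / 2 * (2 * ∑ j ∈ W1, ((a j : ℕ) : ℝ) - 2 * ∑ j ∈ S1 \ W1, ((a j : ℕ) : ℝ) +
          ∑ j ∈ W2 ∪ W3, ((a j : ℕ) : ℝ) - ∑ j ∈ (S2 \ W2) ∪ (S3 \ W3), ((a j : ℕ) : ℝ)) := by
    have e1 : ∑ j ∈ W1, 2 * trigArg ((a j : ℕ) : ℝ) = 2 * ∑ j ∈ W1, trigArg ((a j : ℕ) : ℝ) :=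
      (Finset.mul_sum _ _ _).symm
    have e2 : ∑ j ∈ S1 \ W1, 2 * trigArg ((a j : ℕ) : ℝ) = 2 * ∑ j ∈ S1 \ W1, trigArg ((a j : ℕ) : ℝ) :=
      (Finset.mul_sum _ _ _).symm
    rw [e1, e2, hu1, hu2, sum_trigArg, sum_trigArg, sum_trigArg, sum_trigArg, sum_trigArg, sum_trigArg,
      hc1, hc2, hc3]
    push_cast
    ring
  -- exponential identity
  have hexp : Complex.exp (((∑ j ∈ W1, 2 * trigArg ((a j : ℕ) : ℝ) -
        ∑ j ∈ S1 \ W1, 2 * trigArg ((a j : ℕ) : ℝ) : ℝ) : ℂ) * Complex.I) *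
      Complex.exp (((∑ j ∈ W2, trigArg ((a j : ℕ) : ℝ) -
        ∑ j ∈ S2 \ W2, trigArg ((a j : ℕ) : ℝ) : ℝ) : ℂ) * Complex.I) *
      Complex.exp (((∑ j ∈ W3, trigArg ((a j : ℕ) : ℝ) -
        ∑ j ∈ S3 \ W3, trigArg ((a j : ℕ) : ℝ) : ℝ) : ℂ) * Complex.I)
      = Complex.exp (Complex.I * ((Real.pi : ℂ) / 4) *
          ((((2 * S1.card + S2.card + S3.card : ℕ) : ℝ) - 4 * ((S1 \ W1).card : ℝ)
            - 2 * ((S2 \ W2).card : ℝ) - 2 * ((S3 \ W3).card : ℝ) : ℝ) : ℂ)) *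
        Complex.exp (Complex.I * ((Real.pi : ℂ) / 2) *
          (((2 * ∑ j ∈ W1, ((a j : ℕ) : ℝ) - 2 * ∑ j ∈ S1 \ W1, ((a j : ℕ) : ℝ) +
              ∑ j ∈ W2 ∪ W3, ((a j : ℕ) : ℝ) -
              ∑ j ∈ (S2 \ W2) ∪ (S3 \ W3), ((a j : ℕ) : ℝ) : ℝ)) : ℂ)) := by
    rw [← Complex.exp_add, ← Complex.exp_add, ← Complex.exp_add]
    congr 1
    calc (((∑ j ∈ W1, 2 * trigArg ((a j : ℕ) : ℝ) -
            ∑ j ∈ S1 \ W1, 2 * trigArg ((a j : ℕ) : ℝ) : ℝ) : ℂ) * Complex.I +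
          ((∑ j ∈ W2, trigArg ((a j : ℕ) : ℝ) -
            ∑ j ∈ S2 \ W2, trigArg ((a j : ℕ) : ℝ) : ℝ) : ℂ) * Complex.I) +
          ((∑ j ∈ W3, trigArg ((a j : ℕ) : ℝ) -
            ∑ j ∈ S3 \ W3, trigArg ((a j : ℕ) : ℝ) : ℝ) : ℂ) * Complex.I
        = (((∑ j ∈ W1, 2 * trigArg ((a j : ℕ) : ℝ) - ∑ j ∈ S1 \ W1, 2 * trigArg ((a j : ℕ) : ℝ)) +
            (∑ j ∈ W2, trigArg ((a j : ℕ) : ℝ) - ∑ j ∈ S2 \ W2, trigArg ((a j : ℕ) : ℝ)) +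
            (∑ j ∈ W3, trigArg ((a j : ℕ) : ℝ) - ∑ j ∈ S3 \ W3, trigArg ((a j : ℕ) : ℝ)) : ℝ) : ℂ) *
            Complex.I := by push_cast; ring
      _ = _ := by rw [harg]; push_cast; ring
  -- finish
  simp only [Mfun, one_pow, pow_add]
  linear_combination ((-1 : ℂ) ^ (S1 \ W1).card * (-1 : ℂ) ^ (S3 \ W3).card) * hexp
end
end
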